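/- arXiv:2212.14096 — 9 statements merged into one kernel-verified Lean document; each statement's English description precedes it below -/
import Mathlib

section
/- An ultrafilter U over a measurable cardinal κ is a p-point if and only if for every ordinal α below j_U(κ) there exists a function f : κ → κ such that α ≤ j_U(f)(κ), where j_U : V → M_U is the ultrapower embedding. -/
open Cardinal Set

universe u

/-- `W` is a `κ`-complete ultrafilter: closed under intersections of fewer than `κ` members. -/
def CComplete {β : Type u} (κ : Cardinal.{0}) (W : Ultrafilter β) : Prop :=
  ∀ (ι : Type) (f : ι → Set β), #ι < κ → (∀ i, f i ∈ W) → (⋂ i, f i) ∈ W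

/-- `f` is almost one-to-one mod `W`: on a set `X ∈ W`, all preimages of initial
segments are bounded. -/
def AlmostInj {β : Type u} [LinearOrder β] (W : Ultrafilter β) (f : β → β) : Prop :=
  ∃ X ∈ W, ∀ γ : β, ∃ b : β, ∀ x ∈ X, f x < γ → x ≤ b

/-- `W` is a p-point ultrafilter: every function which is not constant mod `W` is
almost one-to-one mod `W`. -/
def IsPPoint {β : Type u} [LinearOrder β] (W : Ultrafilter β) : Prop :=
  ∀ f : β → β, (¬ ∃ c, {x | f x = c} ∈ W) → AlmostInj W f

section Aux

variable {κ : Cardinal.{0}} {U : Ultrafilter κ.ord.ToType}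

lemma small_not_mem (hcc : CComplete κ U) (hnp : ∀ x, U ≠ (pure x : Ultrafilter _))
    {A : Set κ.ord.ToType} (hA : #A < κ) : A ∉ U := by
  intro hAU
  have h1 : ∀ a : A, ({(a : κ.ord.ToType)}ᶜ : Set κ.ord.ToType) ∈ U := by
    intro a
    rw [Ultrafilter.compl_mem_iff_notMem]
    intro h
    obtain ⟨x, _, hx⟩ := Ultrafilter.eq_pure_of_finite_mem (Set.finite_singleton _) h
    exact hnp x hx
  have h2 := hcc A (fun a => ({(a : κ.ord.ToType)}ᶜ : Set _)) hA h1
  have h3 : (⋂ a : A, ({(a : κ.ord.ToType)}ᶜ : Set _)) = Aᶜ := by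
    ext x
    simp only [Set.mem_iInter, Set.mem_compl_iff, Set.mem_singleton_iff, Subtype.forall]
    exact ⟨fun h hx => h x hx rfl, fun h i hi he => h (he ▸ hi)⟩
  rw [h3] at h2
  have h4 := Filter.inter_mem (Ultrafilter.mem_coe.mpr hAU) (Ultrafilter.mem_coe.mpr h2)
  rw [Set.inter_compl_self] at h4
  exact Ultrafilter.empty_notMem (Ultrafilter.mem_coe.mp h4)

lemma small_bdd (hcc : CComplete κ U) (hnp : ∀ x, U ≠ (pure x : Ultrafilter _))
    {A : Set κ.ord.ToType} (hA : #A < κ) : ∃ b, ∀ x ∈ A, x ≤ b := by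
  by_contra hno
  push_neg at hno
  have h1 : ∀ a : A, ((Set.Iio (a : κ.ord.ToType))ᶜ : Set κ.ord.ToType) ∈ U := fun a =>
    Ultrafilter.compl_mem_iff_notMem.mpr (small_not_mem hcc hnp (Cardinal.mk_Iio_toType_ord_lt _))
  have h2 := hcc A (fun a => ((Set.Iio (a : κ.ord.ToType))ᶜ : Set _)) hA h1
  have h3 : (⋂ a : A, ((Set.Iio (a : κ.ord.ToType))ᶜ : Set _)) = ∅ := by
    ext b
    simp only [Set.mem_iInter, Set.mem_compl_iff, Set.mem_Iio, not_lt, Set.mem_empty_iff_false,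
      iff_false, not_forall, Subtype.exists]
    obtain ⟨x, hxA, hx⟩ := hno b
    exact ⟨x, hxA, by simpa using hx⟩
  rw [h3] at h2
  exact Ultrafilter.empty_notMem h2

lemma const_of_le (hcc : CComplete κ U) {u : κ.ord.ToType → κ.ord.ToType} {c : κ.ord.ToType}
    (hIic : #(Set.Iic c) < κ) (h : {x | u x ≤ c} ∈ U) : ∃ d, {x | u x = d} ∈ U := by
  by_contra hno
  push_neg at hno
  have h1 : ∀ d : Set.Iic c, ({x | u x = (d : κ.ord.ToType)}ᶜ : Set κ.ord.ToType) ∈ U := fun d =>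
    Ultrafilter.compl_mem_iff_notMem.mpr (hno d)
  have h2 := hcc (Set.Iic c) _ hIic h1
  have h3 := Filter.inter_mem (Ultrafilter.mem_coe.mpr h) (Ultrafilter.mem_coe.mpr h2)
  obtain ⟨x, hx1, hx2⟩ := Ultrafilter.nonempty_of_mem h3
  have := Set.mem_iInter.mp hx2 ⟨u x, hx1⟩
  simp at this

end Aux


/-- for a `κ`-complete (nonprincipal) ultrafilter `U` over a measurable
cardinal `κ`, `U` is a p-point iff every ordinal `α < j_U(κ)` is below `j_U(f)(κ)` for
some `f : κ → κ`.  Here the points of `κ` are the elements of the type `κ.ord.ToType`;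
the ordinals of the ultrapower below `j_U(κ)` are exactly the germs (mod `U`) of
functions `κ → κ`; `κ` itself is represented by the function `π`, characterized as the
least germ strictly above all the constant germs (by `κ`-completeness, the constants
represent exactly the ordinals `< κ`); and `j_U(f)(κ)` is the germ of `f ∘ π`. -/
theorem stmt0 (κ : Cardinal.{0}) (hκ : ℵ₀ < κ)
    (U : Ultrafilter κ.ord.ToType) (hcc : CComplete κ U)
    (hnp : ∀ x, U ≠ (pure x : Ultrafilter _))
    (π : κ.ord.ToType → κ.ord.ToType)
    (hπ₁ : ∀ c : κ.ord.ToType,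
      (Filter.Germ.ofFun (fun _ => c) : Filter.Germ (↑U) κ.ord.ToType) < .ofFun π)
    (hπ₂ : ∀ h : κ.ord.ToType → κ.ord.ToType,
      (∀ c : κ.ord.ToType,
        (Filter.Germ.ofFun (fun _ => c) : Filter.Germ (↑U) κ.ord.ToType) < .ofFun h) →
      (Filter.Germ.ofFun π : Filter.Germ (↑U) κ.ord.ToType) ≤ .ofFun h) :
    IsPPoint U ↔
      ∀ g : κ.ord.ToType → κ.ord.ToType, ∃ f : κ.ord.ToType → κ.ord.ToType,
        (Filter.Germ.ofFun g : Filter.Germ (↑U) κ.ord.ToType) ≤ .ofFun (f ∘ π) := by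
  have noMax : NoMaxOrder κ.ord.ToType := Cardinal.noMaxOrder hκ.le
  have hIic : ∀ b : κ.ord.ToType, #(Set.Iic b) < κ := by
    intro b
    obtain ⟨b', hb'⟩ := exists_gt b
    refine lt_of_le_of_lt (Cardinal.mk_le_mk_of_subset ?_) (Cardinal.mk_Iio_toType_ord_lt b')
    intro x hx
    exact lt_of_le_of_lt hx hb'
  constructor
  · intro hP g
    have hπnc : ¬∃ c, {x | π x = c} ∈ U := by
      rintro ⟨c, hc⟩
      have heq : (Filter.Germ.ofFun π : Filter.Germ (↑U) _) = .ofFun (fun _ => c) :=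
        Filter.Germ.coe_eq.mpr hc
      have := hπ₁ c
      rw [heq] at this
      exact lt_irrefl _ this
    obtain ⟨X, hX, hXb⟩ := hP π hπnc
    have key : ∀ ξ : κ.ord.ToType, ∃ v, ∀ x ∈ X, π x ≤ ξ → g x ≤ v := by
      intro ξ
      obtain ⟨ξ', hξ'⟩ := exists_gt ξ
      obtain ⟨b, hb⟩ := hXb ξ'
      obtain ⟨v, hv⟩ := small_bdd hcc hnp
        (A := g '' Set.Iic b) (lt_of_le_of_lt Cardinal.mk_image_le (hIic b))
      exact ⟨v, fun x hx hxξ => hv _ ⟨x, hb x hx (lt_of_le_of_lt hxξ hξ'), rfl⟩⟩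
    choose f hf using key
    refine ⟨f, Filter.Germ.coe_le.mpr ?_⟩
    exact Filter.mem_of_superset (Ultrafilter.mem_coe.mpr hX)
      (fun x hx => hf (π x) x hx le_rfl)
  · intro hR h hnc
    obtain ⟨f₀, hf₀⟩ := hR id
    have hA₀ : {x | x ≤ f₀ (π x)} ∈ U := Filter.Germ.coe_le.mp hf₀
    have hch : ∀ c, (Filter.Germ.ofFun (fun _ => c) : Filter.Germ (↑U) _) < .ofFun h := by
      intro c
      have hle : {x | h x ≤ c} ∉ U := fun hmem => hnc (const_of_le hcc (hIic c) hmem)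
      rw [lt_iff_le_not_ge]
      constructor
      · refine Filter.Germ.coe_le.mpr ?_
        refine Filter.mem_of_superset
          (Ultrafilter.mem_coe.mpr (Ultrafilter.compl_mem_iff_notMem.mpr hle)) ?_
        intro x hx
        simp only [Set.mem_compl_iff, Set.mem_setOf_eq] at hx
        exact le_of_lt (not_le.mp hx)
      · intro hcon
        exact hle (Filter.Germ.coe_le.mp hcon)
    have hπh : {x | π x ≤ h x} ∈ U := Filter.Germ.coe_le.mp (hπ₂ h hch)
    refine ⟨{x | x ≤ f₀ (π x)} ∩ {x | π x ≤ h x}, Filter.inter_mem hA₀ hπh, ?_⟩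
    intro γ
    obtain ⟨b, hb⟩ := small_bdd hcc hnp
      (A := f₀ '' Set.Iio γ) (lt_of_le_of_lt Cardinal.mk_image_le (Cardinal.mk_Iio_toType_ord_lt γ))
    exact ⟨b, fun x hx hγ =>
      le_trans hx.1 (hb _ ⟨π x, lt_of_le_of_lt hx.2 hγ, rfl⟩)⟩
end

section
/- If U is a p-point ultrafilter over κ and f : κ → κ is not constant modulo U, then f is almost one-to-one modulo U; that is, there exists X ∈ U such that for every γ < κ, the set f⁻¹[γ] ∩ X is bounded in κ. -/
open Cardinal Set

universe u

/-- if `U` is a p-point ultrafilter over `κ` — here taken in the ultrapower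
formulation: for every `α < j_U(κ)` (i.e. every germ of a function `g : κ → κ`) there is
`h : κ → κ` with `α ≤ j_U(h)(κ)` — then every `f : κ → κ` which is not constant mod `U`
is almost one-to-one mod `U`: there is `X ∈ U` such that for every `γ < κ` the set
`f⁻¹[γ] ∩ X` is bounded in `κ`.  The points of `κ` are the elements of `κ.ord.ToType`;
`κ` itself is represented in the ultrapower by `π`, the least germ strictly above all
constant germs; and `j_U(h)(κ)` is the germ of `h ∘ π`. -/
theorem stmt1 (κ : Cardinal.{0}) (hκ : ℵ₀ < κ)
    (U : Ultrafilter κ.ord.ToType) (hcc : CComplete κ U)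
    (hnp : ∀ x, U ≠ (pure x : Ultrafilter _))
    (π : κ.ord.ToType → κ.ord.ToType)
    (hπ₁ : ∀ c : κ.ord.ToType,
      (Filter.Germ.ofFun (fun _ => c) : Filter.Germ (↑U) κ.ord.ToType) < .ofFun π)
    (hπ₂ : ∀ h : κ.ord.ToType → κ.ord.ToType,
      (∀ c : κ.ord.ToType,
        (Filter.Germ.ofFun (fun _ => c) : Filter.Germ (↑U) κ.ord.ToType) < .ofFun h) →
      (Filter.Germ.ofFun π : Filter.Germ (↑U) κ.ord.ToType) ≤ .ofFun h)
    (hpp : ∀ g : κ.ord.ToType → κ.ord.ToType, ∃ h : κ.ord.ToType → κ.ord.ToType,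
      (Filter.Germ.ofFun g : Filter.Germ (↑U) κ.ord.ToType) ≤ .ofFun (h ∘ π))
    (f : κ.ord.ToType → κ.ord.ToType)
    (hf : ¬ ∃ c, {x | f x = c} ∈ U) :
    AlmostInj U f := by
  classical
  -- small sets are not in U
  have hsmall : ∀ S : Set κ.ord.ToType, #S < κ → S ∉ U := by
    intro S hS hSU
    have h1 : ∀ x : S, ({(x : κ.ord.ToType)}ᶜ : Set κ.ord.ToType) ∈ U := by
      intro x
      rw [Ultrafilter.compl_mem_iff_notMem]
      intro hx
      obtain ⟨y, hy, hUy⟩ := Ultrafilter.eq_pure_of_finite_mem (Set.finite_singleton _) hx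
      exact hnp y hUy
    have h2 := hcc S (fun x => ({(x : κ.ord.ToType)}ᶜ : Set κ.ord.ToType)) hS h1
    have h3 : (⋂ x : S, ({(x : κ.ord.ToType)}ᶜ : Set κ.ord.ToType)) ∩ S ∈ U :=
      Filter.inter_mem h2 hSU
    obtain ⟨y, hy1, hy2⟩ := Ultrafilter.nonempty_of_mem h3
    exact (Set.mem_iInter.1 hy1 ⟨y, hy2⟩) rfl
  have hIic : ∀ c : κ.ord.ToType, #(Set.Iic c) < κ := by
    intro c
    have : (Set.Iic c : Set κ.ord.ToType) = insert c (Set.Iio c) := by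
      ext x; simp [le_iff_lt_or_eq, or_comm]
    rw [this]
    refine lt_of_le_of_lt Cardinal.mk_insert_le ?_
    exact Cardinal.add_lt_of_lt hκ.le (Cardinal.mk_Iio_ord_toType c) (lt_of_le_of_lt one_le_aleph0 hκ)
  -- bounding small sets
  have hbound : ∀ S : Set κ.ord.ToType, #S < κ → ∃ b, ∀ x ∈ S, x ≤ b := by
    intro S hS
    have h1 : ∀ s : S, ((Set.Iic (s : κ.ord.ToType))ᶜ : Set κ.ord.ToType) ∈ U := by
      intro s
      rw [Ultrafilter.compl_mem_iff_notMem]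
      exact hsmall _ (hIic _)
    have h2 := hcc S _ hS h1
    obtain ⟨b, hb⟩ := Ultrafilter.nonempty_of_mem h2
    refine ⟨b, fun x hx => ?_⟩
    have := Set.mem_iInter.1 hb ⟨x, hx⟩
    exact le_of_lt (lt_of_not_ge this)
  -- f dominates all constants mod U
  have hfc : ∀ c : κ.ord.ToType, {x | c < f x} ∈ U := by
    intro c
    have hle : {x | f x ≤ c} ∉ U := by
      intro hmem
      have h1 : ∀ v : Set.Iic c, ({x | f x = (v : κ.ord.ToType)}ᶜ : Set κ.ord.ToType) ∈ U := by
        intro v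
        rw [Ultrafilter.compl_mem_iff_notMem]
        exact fun hv => hf ⟨v, hv⟩
      have h2 := hcc (Set.Iic c) _ (hIic c) h1
      obtain ⟨y, hy1, hy2⟩ := Ultrafilter.nonempty_of_mem (Filter.inter_mem h2 hmem)
      exact Set.mem_iInter.1 hy1 ⟨f y, hy2⟩ rfl
    have : ({x | f x ≤ c}ᶜ : Set κ.ord.ToType) ∈ U :=
      Ultrafilter.compl_mem_iff_notMem.2 hle
    convert this using 1
    ext x; simp [not_le]
  -- π ≤ f mod U
  have hπf : (Filter.Germ.ofFun π : Filter.Germ (↑U) κ.ord.ToType) ≤ .ofFun f := by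
    apply hπ₂
    intro c
    exact Filter.Germ.coe_lt.2 (hfc c)
  have hπf' : {x | π x ≤ f x} ∈ U := Filter.Germ.coe_le.1 hπf
  -- p-point: bound identity by h ∘ π
  obtain ⟨h, hh⟩ := hpp id
  have hh' : {x | x ≤ h (π x)} ∈ U := Filter.Germ.coe_le.1 hh
  refine ⟨{x | π x ≤ f x} ∩ {x | x ≤ h (π x)}, Filter.inter_mem hπf' hh', ?_⟩
  intro γ
  obtain ⟨b, hb⟩ := hbound (h '' Set.Iio γ)
    (lt_of_le_of_lt Cardinal.mk_image_le (Cardinal.mk_Iio_ord_toType γ))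
  refine ⟨b, fun x hx hxγ => ?_⟩
  exact le_trans hx.2 (hb _ ⟨π x, lt_of_le_of_lt hx.1 hxγ, rfl⟩)
end

section
/- If π : X → Y is a Rudin-Keisler projection from an ultrafilter W on X to an ultrafilter U on Y (i.e., U = {B ⊆ Y : π⁻¹[B] ∈ W}), and W satisfies the Galvin property Gal(W, κ, κ⁺), then U satisfies Gal(U, κ, κ⁺). -/
open Cardinal Set

universe u v

/-- The Galvin property `Gal(W, κ, lam)`: from every `lam`-indexed family of sets of `W`
one can extract a subfamily of size `κ` whose intersection lies in `W`. -/
def Gal {β : Type u} (W : Ultrafilter β) (κ lam : Cardinal.{0}) : Prop :=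
  ∀ A : lam.ord.ToType → Set β, (∀ i, A i ∈ W) →
    ∃ I : Set lam.ord.ToType, #I = κ ∧ (⋂ i ∈ I, A i) ∈ W

/-- if `π : X → Y` is a Rudin–Keisler projection from an ultrafilter `W` on
`X` to an ultrafilter `U` on `Y` (i.e. `U = {B ⊆ Y : π⁻¹[B] ∈ W}`), and `W` satisfies
`Gal(W, κ, κ⁺)`, then `U` satisfies `Gal(U, κ, κ⁺)`. -/
theorem stmt2 {X : Type u} {Y : Type v} (W : Ultrafilter X) (U : Ultrafilter Y)
    (π : X → Y) (hproj : ∀ B : Set Y, B ∈ U ↔ π ⁻¹' B ∈ W)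
    (κ : Cardinal.{0}) (hGal : Gal W κ (Order.succ κ)) :
    Gal U κ (Order.succ κ) := by
  intro A hA
  obtain ⟨I, hI, hmem⟩ := hGal (fun i => π ⁻¹' (A i)) (fun i => (hproj (A i)).1 (hA i))
  refine ⟨I, hI, (hproj _).2 ?_⟩
  simpa [preimage_iInter] using hmem
end

section
/- Let ⟨A_i : i < κ⁺⟩ be sets in an ultrafilter W on κ × κ with W = ∑_U U_α for κ-complete ultrafilters U, U_α on κ. For i < κ⁺ let A_i^{(0)} = {α : (A_i)_α ∈ U_α}, and for ξ < κ⁺ and α₁ < α₂ < κ define H_{ξ,⟨α₁,α₂⟩} = {γ < κ⁺ : A_γ^{(0)} ∩ α₁ = A_ξ^{(0)} ∩ α₁ and for all β < α₁, (A_γ)_β ∩ α₂ = (A_ξ)_β ∩ α₂}. Then, assuming κ^{<κ} = κ, there exists ξ* < κ⁺ such that for all α₁ < α₂ < κ, |H_{ξ*,⟨α₁,α₂⟩}| = κ⁺. -/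
open Cardinal Set

universe u

/-- The `U`-sum `∑_U U_α` of the ultrafilters `Us α`. -/
def sumUf {α β : Type u} (U : Ultrafilter α) (Us : α → Ultrafilter β) :
    Ultrafilter (α × β) :=
  U.bind fun a => (Us a).map (Prod.mk a)

/-- Equality of two "trace" subsets of a subtype vs. equality of intersections. -/
lemma aux_inter_iff {T : Type} (s : Set T) (P Q : T → Prop) :
    ({a : s | P ↑a} = {a : s | Q ↑a}) ↔ ({a | P a} ∩ s = {a | Q a} ∩ s) := by
  rw [Set.ext_iff, Set.ext_iff]
  constructor
  · intro h x
    simp only [mem_inter_iff, mem_setOf_eq]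
    constructor
    · rintro ⟨hp, hs⟩
      exact ⟨(h ⟨x, hs⟩).1 hp, hs⟩
    · rintro ⟨hq, hs⟩
      exact ⟨(h ⟨x, hs⟩).2 hq, hs⟩
  · intro h a
    have := h ↑a
    simp only [mem_inter_iff, mem_setOf_eq] at this
    have hs := a.2
    simp only [mem_setOf_eq]
    tauto

/-- If a map has codomain of size `≤ κ`, the set of points lying in a fiber of size `≤ κ`
has size at most `#C * κ`. -/
lemma small_fibers {S C : Type} (f : S → C) (κ : Cardinal) :
    #{γ : S | #{γ' : S | f γ' = f γ} ≤ κ} ≤ #C * κ := by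
  classical
  set s : C → Set S := fun c => {γ | f γ = c ∧ #{γ' : S | f γ' = f γ} ≤ κ} with hs
  have hsub : {γ : S | #{γ' : S | f γ' = f γ} ≤ κ} ⊆ ⋃ c, s c := by
    intro γ hγ
    exact mem_iUnion.2 ⟨f γ, rfl, hγ⟩
  have hbound : ∀ c, #(s c) ≤ κ := by
    intro c
    rcases Set.eq_empty_or_nonempty (s c) with h | ⟨γ₀, hγ₀c, hγ₀⟩
    · simp [h]
    · refine le_trans (Cardinal.mk_le_mk_of_subset (t := {γ' : S | f γ' = f γ₀}) ?_) hγ₀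
      rintro γ ⟨hγc, -⟩
      simp only [mem_setOf_eq]
      rw [hγc, hγ₀c]
  calc #{γ : S | #{γ' : S | f γ' = f γ} ≤ κ} ≤ #(⋃ c, s c) :=
        Cardinal.mk_le_mk_of_subset hsub
    _ ≤ #C * ⨆ c, #(s c) := Cardinal.mk_iUnion_le s
    _ ≤ #C * κ := mul_le_mul_right (ciSup_le' hbound) _

/-- `κ` is regular uncountable with `κ^{<κ} = κ`, `U` and the `U_α` are
`κ`-complete ultrafilters on `κ`, and `⟨A_i : i < κ⁺⟩` are sets in `W = ∑_U U_α`.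
For `i < κ⁺` let `A_i⁽⁰⁾ = {α : (A_i)_α ∈ U_α}`, and for `ξ < κ⁺`, `α₁ < α₂ < κ` let
`H_{ξ,⟨α₁,α₂⟩} = {γ < κ⁺ : A_γ⁽⁰⁾ ∩ α₁ = A_ξ⁽⁰⁾ ∩ α₁ ∧ ∀ β < α₁,
(A_γ)_β ∩ α₂ = (A_ξ)_β ∩ α₂}`.  Then there is `ξ* < κ⁺` such that all the sets
`H_{ξ*,⟨α₁,α₂⟩}` have cardinality `κ⁺`. -/
theorem stmt6 (κ : Cardinal.{0}) (hκ : ℵ₀ < κ) (hreg : κ.IsRegular)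
    (hpow : κ ^< κ = κ)
    (U : Ultrafilter κ.ord.ToType) (hUcc : CComplete κ U)
    (Us : κ.ord.ToType → Ultrafilter κ.ord.ToType)
    (hUscc : ∀ a, CComplete κ (Us a))
    (A : (Order.succ κ).ord.ToType → Set (κ.ord.ToType × κ.ord.ToType))
    (hA : ∀ i, A i ∈ sumUf U Us) :
    ∃ ξ : (Order.succ κ).ord.ToType,
      ∀ α₁ α₂ : κ.ord.ToType, α₁ < α₂ →
        #({γ : (Order.succ κ).ord.ToType |
            {a : κ.ord.ToType | {b | (a, b) ∈ A γ} ∈ Us a} ∩ Set.Iio α₁ =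
              {a : κ.ord.ToType | {b | (a, b) ∈ A ξ} ∈ Us a} ∩ Set.Iio α₁ ∧
            ∀ β : κ.ord.ToType, β < α₁ →
              {b | (β, b) ∈ A γ} ∩ Set.Iio α₂ = {b | (β, b) ∈ A ξ} ∩ Set.Iio α₂} :
          Set (Order.succ κ).ord.ToType) = Order.succ κ := by
  classical
  let T := κ.ord.ToType
  let S := (Order.succ κ).ord.ToType
  have hκ0 : ℵ₀ ≤ κ := hκ.le
  -- the colouring
  let F : (p : T × T) → S → (Set (Iio p.1) × (Iio p.1 → Set (Iio p.2))) :=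
    fun p γ =>
      ⟨{a : Iio p.1 | {b | ((a : T), b) ∈ A γ} ∈ Us a},
        fun β => {b : Iio p.2 | ((β : T), (b : T)) ∈ A γ}⟩
  -- each colour space has size at most κ
  have hC : ∀ p : T × T, #(Set (Iio p.1) × (Iio p.1 → Set (Iio p.2))) ≤ κ := by
    intro p
    have ha : #(Iio p.1) < κ := Cardinal.mk_Iio_ord_toType p.1
    have hb : #(Iio p.2) < κ := Cardinal.mk_Iio_ord_toType p.2
    have h2 : (2 : Cardinal) ≤ κ := le_trans (by exact_mod_cast (Cardinal.nat_lt_aleph0 2).le) hκ0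
    have h1 : #(Set (Iio p.1)) ≤ κ := by
      rw [Cardinal.mk_set]
      calc (2 : Cardinal) ^ #(Iio p.1) ≤ κ ^ #(Iio p.1) :=
            Cardinal.power_le_power_right h2
        _ ≤ κ ^< κ := Cardinal.le_powerlt κ ha
        _ = κ := hpow
    have h2' : #(Iio p.1 → Set (Iio p.2)) ≤ κ := by
      have : #(Iio p.1 → Set (Iio p.2)) = (2 : Cardinal) ^ (#(Iio p.2) * #(Iio p.1)) := by
        rw [Cardinal.power_mul, ← Cardinal.mk_set]
        exact (Cardinal.power_def _ _).symm
      rw [this]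
      have hmul : #(Iio p.2) * #(Iio p.1) < κ := Cardinal.mul_lt_of_lt hκ0 hb ha
      calc (2 : Cardinal) ^ (#(Iio p.2) * #(Iio p.1)) ≤ κ ^ (#(Iio p.2) * #(Iio p.1)) :=
            Cardinal.power_le_power_right h2
        _ ≤ κ ^< κ := Cardinal.le_powerlt κ hmul
        _ = κ := hpow
    calc #(Set (Iio p.1) × (Iio p.1 → Set (Iio p.2)))
        = #(Set (Iio p.1)) * #(Iio p.1 → Set (Iio p.2)) := by
          simpa using Cardinal.mk_prod _ _
      _ ≤ κ * κ := mul_le_mul' h1 h2'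
      _ = κ := Cardinal.mul_eq_self hκ0
  -- the bad sets
  set Bad : (T × T) → Set S := fun p => {γ | #{γ' : S | F p γ' = F p γ} ≤ κ} with hBadDef
  have hBadp : ∀ p, #(Bad p) ≤ κ := fun p =>
    le_trans (small_fibers (F p) κ)
      (le_trans (mul_le_mul_left (hC p) κ) (le_of_eq (Cardinal.mul_eq_self hκ0)))
  have hT : #(T × T) ≤ κ := by
    have : #(T × T) = κ * κ := by
      rw [Cardinal.mk_prod]
      simp [T, Cardinal.mk_ord_toType]
    rw [this, Cardinal.mul_eq_self hκ0]
  have hBad : #(⋃ p, Bad p) ≤ κ := by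
    calc #(⋃ p, Bad p) ≤ #(T × T) * ⨆ p, #(Bad p) := Cardinal.mk_iUnion_le Bad
      _ ≤ κ * κ := mul_le_mul' hT (ciSup_le' hBadp)
      _ = κ := Cardinal.mul_eq_self hκ0
  -- pick a point outside all bad sets
  obtain ⟨ξ, hξ⟩ : ∃ ξ : S, ξ ∉ ⋃ p, Bad p := by
    by_contra h
    push_neg at h
    have : (Set.univ : Set S) ⊆ ⋃ p, Bad p := fun x _ => h x
    have hle : #S ≤ κ := le_trans (by simpa using Cardinal.mk_le_mk_of_subset this) hBad
    rw [Cardinal.mk_ord_toType] at hle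
    exact absurd hle (not_le.2 (Order.lt_succ κ))
  refine ⟨ξ, ?_⟩
  intro α₁ α₂ hlt
  have hξp : ξ ∉ Bad (α₁, α₂) := fun h => hξ (mem_iUnion.2 ⟨(α₁, α₂), h⟩)
  have hbig : κ < #{γ' : S | F (α₁, α₂) γ' = F (α₁, α₂) ξ} := not_le.1 hξp
  -- the H-set is exactly the fiber of ξ
  have hset : {γ : S |
      {a : T | {b | (a, b) ∈ A γ} ∈ Us a} ∩ Set.Iio α₁ =
        {a : T | {b | (a, b) ∈ A ξ} ∈ Us a} ∩ Set.Iio α₁ ∧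
      ∀ β : T, β < α₁ →
        {b | (β, b) ∈ A γ} ∩ Set.Iio α₂ = {b | (β, b) ∈ A ξ} ∩ Set.Iio α₂} =
      {γ' : S | F (α₁, α₂) γ' = F (α₁, α₂) ξ} := by
    ext γ
    simp only [mem_setOf_eq, F, Prod.mk.injEq]
    constructor
    · rintro ⟨h1, h2⟩
      refine ⟨?_, ?_⟩
      · exact (aux_inter_iff (Iio α₁) _ _).2 h1
      · funext β
        exact (aux_inter_iff (Iio α₂) _ _).2 (h2 β β.2)
    · rintro ⟨h1, h2⟩
      refine ⟨(aux_inter_iff (Iio α₁) _ _).1 h1, ?_⟩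
      intro β hβ
      exact (aux_inter_iff (Iio α₂) _ _).1 (congrFun h2 ⟨β, hβ⟩)
  rw [hset]
  refine le_antisymm ?_ (Order.succ_le_of_lt ?_)
  · calc #{γ' : S | F (α₁, α₂) γ' = F (α₁, α₂) ξ} ≤ #S := Cardinal.mk_set_le _
      _ = Order.succ κ := Cardinal.mk_ord_toType _
  · exact lt_of_le_of_lt (le_refl κ) hbig
end

section
/- If κ is 2^κ-supercompact, then there exists a κ-complete ultrafilter over κ failing the Galvin property Gal(U, κ, κ⁺). -/
open Cardinal Set

universe u

/-- `κ` is `lam`-supercompact: there is a `κ`-complete, fine, normal ultrafilter on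
`P_κ(lam) = {s ⊆ lam : |s| < κ}` (the first-order characterization of the existence of
an elementary `j : V → M` with `crit(j) = κ`, `j(κ) > lam` and `M^lam ⊆ M`). -/
def IsSupercompact (κ lam : Cardinal.{0}) : Prop :=
  ∃ UU : Ultrafilter {s : Set lam.ord.ToType // #s < κ},
    CComplete κ UU ∧
      (∀ x : lam.ord.ToType, {s : {s : Set lam.ord.ToType // #s < κ} | x ∈ s.1} ∈ UU) ∧
      ∀ F : {s : Set lam.ord.ToType // #s < κ} → lam.ord.ToType,
        {s | F s ∈ s.1} ∈ UU → ∃ x, {s | F s = x} ∈ UU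

section Aux

variable {κ : Cardinal.{0}}

/-- Extension: push the supercompactness measure forward along a choice function. -/
theorem extendUF {Λ T : Type} (UU : Ultrafilter {s : Set Λ // #s < κ})
    (hcc : CComplete κ UU)
    (hfine : ∀ x : Λ, {s : {s : Set Λ // #s < κ} | x ∈ s.1} ∈ UU)
    (G : Λ → Set T)
    (hne : ∀ s : Set Λ, #s < κ → (⋂ x ∈ s, G x).Nonempty) :
    ∃ W : Ultrafilter T, CComplete κ W ∧ ∀ x, G x ∈ W := by
  have hH : ∀ s : {s : Set Λ // #s < κ}, ∃ t : T, ∀ x ∈ s.1, t ∈ G x := fun s => by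
    obtain ⟨t, ht⟩ := hne s.1 s.2
    exact ⟨t, fun x hx => mem_iInter₂.mp ht x hx⟩
  choose H hHs using hH
  refine ⟨UU.map H, ?_, ?_⟩
  · intro ι f hι hf
    have hpre : H ⁻¹' (⋂ i, f i) = ⋂ i, H ⁻¹' (f i) := preimage_iInter
    rw [Ultrafilter.mem_map, hpre]
    exact hcc ι _ hι fun i => Ultrafilter.mem_map.mp (hf i)
  · intro x
    rw [Ultrafilter.mem_map]
    exact Filter.mem_of_superset (hfine x) fun s hs => hHs s x hs

theorem small_compl_mem (hκ : ℵ₀ < κ) {T : Type} (W : Ultrafilter T)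
    (hcc : CComplete κ W) (hcos : ∀ b : T, {c : T | c ≠ b} ∈ W)
    (A : Set T) (hA : #A < κ) : Aᶜ ∈ W := by
  have h : Aᶜ = ⋂ a : A, {c : T | c ≠ a.1} := by
    ext c
    simp only [mem_compl_iff, mem_iInter, mem_setOf_eq, Subtype.forall]
    constructor
    · intro h a ha hc; exact h (hc ▸ ha)
    · intro h hc; exact h c hc rfl
  rw [h]
  exact hcc A _ hA fun a => hcos a.1

theorem exists_gt_of_small (hκ : ℵ₀ < κ) (W : Ultrafilter κ.ord.ToType)
    (hcc : CComplete κ W) (hcos : ∀ b, {c | c ≠ b} ∈ W)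
    (ι : Type) (g : ι → κ.ord.ToType) (hι : #ι < κ) : ∃ b, ∀ i, g i < b := by
  have hiic : ∀ i, ((Iic (g i))ᶜ : Set _) ∈ W := by
    intro i
    apply small_compl_mem hκ W hcc hcos
    have h1 : (Iic (g i) : Set _) = insert (g i) (Iio (g i)) := (Set.Iio_insert).symm
    calc #(Iic (g i)) ≤ #(Iio (g i)) + 1 := by rw [h1]; exact mk_insert_le
      _ < κ := add_lt_of_lt hκ.le (mk_Iio_ord_toType (g i)) (lt_trans one_lt_aleph0 hκ)
  have hmem : (⋂ i, (Iic (g i))ᶜ) ∈ W := hcc ι _ hι hiic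
  obtain ⟨b, hb⟩ := W.nonempty_of_mem hmem
  exact ⟨b, fun i => not_le.mp (mem_iInter.mp hb i)⟩

theorem two_power_lt (hκ : ℵ₀ < κ) (W : Ultrafilter κ.ord.ToType)
    (hcc : CComplete κ W) (hcos : ∀ b, {c | c ≠ b} ∈ W)
    {c : Cardinal.{0}} (hc : c < κ) : 2 ^ c < κ := by
  by_contra hle
  push_neg at hle
  have hγ : #(c.out) = c := mk_out c
  have h2 : #(c.out → Bool) = 2 ^ c := by rw [mk_arrow, mk_bool, lift_id, lift_id, hγ]
  have hκle : #(κ.ord.ToType) ≤ #(c.out → Bool) := by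
    rw [mk_ord_toType, h2]; exact hle
  obtain ⟨σ⟩ := (le_def _ _).mp hκle
  classical
  have hB : ∀ ξ : c.out, ∃ v : Bool, {b | σ b ξ = v} ∈ W := by
    intro ξ
    rcases W.mem_or_compl_mem {b | σ b ξ = true} with h | h
    · exact ⟨true, h⟩
    · refine ⟨false, ?_⟩
      convert h using 1
      ext b; simp
  choose v hv using hB
  have hS : (⋂ ξ : c.out, {b | σ b ξ = v ξ}) ∈ W := hcc c.out _ (by rw [hγ]; exact hc) hv
  have hsub : (⋂ ξ : c.out, {b | σ b ξ = v ξ}).Subsingleton := by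
    intro b hb b' hb'
    apply σ.injective
    funext ξ
    exact (mem_iInter.mp hb ξ : σ b ξ = v ξ).trans (mem_iInter.mp hb' ξ : σ b' ξ = v ξ).symm
  have hcompl : (⋂ ξ : c.out, {b | σ b ξ = v ξ})ᶜ ∈ W :=
    small_compl_mem hκ W hcc hcos _ (lt_of_le_of_lt hsub.cardinalMk_le_one
      (lt_trans one_lt_aleph0 hκ))
  have h0 : (⋂ ξ : c.out, {b | σ b ξ = v ξ}) ∩ (⋂ ξ : c.out, {b | σ b ξ = v ξ})ᶜ ∈ W :=
    Filter.inter_mem hS hcompl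
  rw [inter_compl_self] at h0
  exact Ultrafilter.empty_notMem h0


abbrev TT (κ : Cardinal.{0}) : Type := Σ b : κ.ord.ToType, ((Iio b → Bool) → Bool)

def XX (κ : Cardinal.{0}) (u : (Order.succ κ).ord.ToType → (κ.ord.ToType → Bool))
    (p : (Order.succ κ).ord.ToType) : Set (TT κ) :=
  {t | t.2 (fun c => u p c.1) = true}

theorem mk_TT {κ : Cardinal.{0}} (hκ : ℵ₀ < κ)
    (hSL : ∀ c : Cardinal.{0}, c < κ → 2 ^ c < κ) : #(TT κ) = κ := by
  apply le_antisymm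
  · show #(Σ b : κ.ord.ToType, ((Iio b → Bool) → Bool)) ≤ κ
    rw [mk_sigma]
    calc (sum fun b => #((Iio b → Bool) → Bool)) ≤ sum (fun _ : κ.ord.ToType => κ) := by
          apply sum_le_sum
          intro b
          have h1 : #(Iio b) < κ := mk_Iio_ord_toType b
          have h2 : #(Iio b → Bool) = 2 ^ #(Iio b) := by
            rw [mk_arrow, mk_bool, lift_id, lift_id]
          have h3 : #((Iio b → Bool) → Bool) = (2 : Cardinal.{0}) ^ ((2 : Cardinal.{0}) ^ #(Iio b)) := by
            rw [mk_arrow, mk_bool, lift_id, lift_id, h2]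
          rw [h3]
          exact (hSL _ (hSL _ h1)).le
      _ = κ := by rw [sum_const', mk_ord_toType, mul_eq_self hκ.le]
  · have hinj : Function.Injective (fun b : κ.ord.ToType => (⟨b, fun _ => true⟩ : TT κ)) :=
      fun b b' h => congrArg Sigma.fst h
    calc κ = #(κ.ord.ToType) := (mk_ord_toType κ).symm
      _ ≤ #(TT κ) := mk_le_of_injective hinj

theorem core {κ : Cardinal.{0}} (hκ : ℵ₀ < κ)
    (hreg : ∀ (ι : Type) (g : ι → κ.ord.ToType), #ι < κ → ∃ b, ∀ i, g i < b)
    (u : (Order.succ κ).ord.ToType → (κ.ord.ToType → Bool)) (hu : Function.Injective u)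
    (S₁ N : Set (Order.succ κ).ord.ToType) (hS₁ : #S₁ < κ) (hN : #N < κ)
    (hdisj : ∀ p ∈ N, p ∉ S₁) :
    ∃ t : TT κ, (∀ p ∈ S₁, t ∈ XX κ u p) ∧ ∀ p ∈ N, t ∉ XX κ u p := by
  classical
  have hd : ∀ pq : S₁ × N, ∃ c : κ.ord.ToType, u pq.1.1 c ≠ u pq.2.1 c := by
    rintro ⟨⟨p, hp⟩, ⟨q, hq⟩⟩
    have hpq : p ≠ q := fun e => hdisj q hq (e ▸ hp)
    exact Function.ne_iff.mp (fun e => hpq (hu e))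
  choose d hd using hd
  have hcard : #(↥S₁ × ↥N) < κ := by
    rw [mk_prod, lift_id, lift_id]
    exact mul_lt_of_lt hκ.le hS₁ hN
  obtain ⟨b, hb⟩ := hreg _ d hcard
  refine ⟨⟨b, fun v => if ∃ p ∈ S₁, ∀ c : Iio b, v c = u p c.1 then true else false⟩,
    ?_, ?_⟩
  · intro p hp
    show (if ∃ p' ∈ S₁, ∀ c : Iio b, u p c.1 = u p' c.1 then true else false) = true
    exact if_pos ⟨p, hp, fun c => rfl⟩
  · intro q hq hmem
    have hmem' : (if ∃ p ∈ S₁, ∀ c : Iio b, u q c.1 = u p c.1 then true else false) = true :=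
      hmem
    have hcond : ∃ p ∈ S₁, ∀ c : Iio b, u q c.1 = u p c.1 := by
      by_contra hnc
      rw [if_neg hnc] at hmem'
      exact Bool.false_ne_true hmem'
    obtain ⟨p, hp, hagree⟩ := hcond
    have h1 := hd ⟨⟨p, hp⟩, ⟨q, hq⟩⟩
    have h2 := hb ⟨⟨p, hp⟩, ⟨q, hq⟩⟩
    exact h1 (hagree ⟨d ⟨⟨p, hp⟩, ⟨q, hq⟩⟩, h2⟩).symm
theorem mainUF (κ : Cardinal.{0}) (hκ : ℵ₀ < κ)
    (UU : Ultrafilter {s : Set ((2 : Cardinal.{0}) ^ κ).ord.ToType // #s < κ})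
    (hcc : CComplete κ UU)
    (hfine : ∀ x, {s : {s : Set ((2 : Cardinal.{0}) ^ κ).ord.ToType // #s < κ} | x ∈ s.1} ∈ UU)
    (hreg : ∀ (ι : Type) (g : ι → κ.ord.ToType), #ι < κ → ∃ b, ∀ i, g i < b)
    (hSL : ∀ c : Cardinal.{0}, c < κ → 2 ^ c < κ) :
    ∃ W : Ultrafilter κ.ord.ToType, CComplete κ W ∧ ¬ Gal W κ (Order.succ κ) := by
  classical
  have hP : #((Order.succ κ).ord.ToType) = Order.succ κ := mk_ord_toType _
  have hsucc_le : (Order.succ κ : Cardinal.{0}) ≤ 2 ^ κ := Order.succ_le_of_lt (cantor κ)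
  have h2κ : ℵ₀ ≤ (2 : Cardinal.{0}) ^ κ := hκ.le.trans (cantor κ).le
  have harrow : #(κ.ord.ToType → Bool) = (2 : Cardinal.{0}) ^ κ := by
    rw [mk_arrow, mk_bool, lift_id, lift_id, mk_ord_toType]
  obtain ⟨u⟩ := (le_def ((Order.succ κ).ord.ToType) (κ.ord.ToType → Bool)).mp
    (by rw [hP, harrow]; exact hsucc_le)
  have hPK : #(κ.ord.ToType → (Order.succ κ).ord.ToType) = (2 : Cardinal.{0}) ^ κ := by
    rw [mk_arrow, lift_id, lift_id, hP, mk_ord_toType]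
    apply le_antisymm
    · calc (Order.succ κ) ^ κ ≤ ((2 : Cardinal.{0}) ^ κ) ^ κ := power_le_power_right hsucc_le
        _ = (2 : Cardinal.{0}) ^ (κ * κ) := by rw [← power_mul]
        _ = (2 : Cardinal.{0}) ^ κ := by rw [mul_eq_self hκ.le]
    · apply power_le_power_right
      have h2a : (2 : Cardinal.{0}) < ℵ₀ := by exact_mod_cast nat_lt_aleph0 2
      exact (h2a.le.trans hκ.le).trans (Order.le_succ κ)
  have hJ : #((Order.succ κ).ord.ToType ⊕ (κ.ord.ToType → (Order.succ κ).ord.ToType)) =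
      (2 : Cardinal.{0}) ^ κ := by
    rw [mk_sum, lift_id, lift_id, hP, hPK]
    exact add_eq_right h2κ hsucc_le
  obtain ⟨bij⟩ := Cardinal.eq.mp
    (show #(((2 : Cardinal.{0}) ^ κ).ord.ToType) =
      #((Order.succ κ).ord.ToType ⊕ (κ.ord.ToType → (Order.succ κ).ord.ToType)) by
        rw [mk_ord_toType, hJ])
  set G : ((Order.succ κ).ord.ToType ⊕ (κ.ord.ToType → (Order.succ κ).ord.ToType)) →
      Set (TT κ) :=
    Sum.elim (fun p => XX κ u p)
      (fun f => if #(range f) = κ then (⋂ p ∈ range f, XX κ u p)ᶜ else univ) with hGdef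
  have hne : ∀ s : Set (((2 : Cardinal.{0}) ^ κ).ord.ToType), #s < κ →
      (⋂ x ∈ s, G (bij x)).Nonempty := by
    intro s hs
    have hs' : #(⇑bij '' s) < κ := lt_of_le_of_lt mk_image_le hs
    set S₁ : Set ((Order.succ κ).ord.ToType) := Sum.inl ⁻¹' (⇑bij '' s) with hS₁def
    have hS₁ : #S₁ < κ := lt_of_le_of_lt (mk_preimage_of_injective _ _ Sum.inl_injective) hs'
    set Fb : Set (κ.ord.ToType → (Order.succ κ).ord.ToType) :=
      (Sum.inr ⁻¹' (⇑bij '' s)) ∩ {f | #(range f) = κ} with hFbdef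
    have hFb : #Fb < κ := lt_of_le_of_lt (mk_le_mk_of_subset inter_subset_left)
      (lt_of_le_of_lt (mk_preimage_of_injective _ _ Sum.inr_injective) hs')
    have hq : ∀ f : Fb, ∃ p : (Order.succ κ).ord.ToType, p ∈ range f.1 ∧ p ∉ S₁ := by
      intro f
      by_contra h
      push_neg at h
      have hsub : range f.1 ⊆ S₁ := fun p hp => h p hp
      have hles : κ ≤ #S₁ := (f.2.2).symm.trans_le (mk_le_mk_of_subset hsub)
      exact absurd hS₁ (not_lt.mpr hles)
    choose q hq1 hq2 using hq
    have hN : #(range q) < κ := lt_of_le_of_lt mk_range_le hFb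
    obtain ⟨t, ht1, ht2⟩ := core hκ hreg u u.injective S₁ (range q) hS₁ hN
      (by rintro p ⟨f, rfl⟩; exact hq2 f)
    refine ⟨t, mem_iInter₂.mpr fun x hx => ?_⟩
    rcases hbx : bij x with p | f
    · have hp : p ∈ S₁ := by
        rw [hS₁def]
        show Sum.inl p ∈ ⇑bij '' s
        rw [← hbx]
        exact ⟨x, hx, rfl⟩
      rw [hGdef, Sum.elim_inl]
      exact ht1 p hp
    · rw [hGdef, Sum.elim_inr]
      by_cases hrf : #(range f) = κ
      · rw [if_pos hrf]
        intro hmem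
        have hfFb : f ∈ Fb := by
          refine ⟨?_, hrf⟩
          show Sum.inr f ∈ ⇑bij '' s
          rw [← hbx]
          exact ⟨x, hx, rfl⟩
        exact ht2 (q ⟨f, hfFb⟩) ⟨⟨f, hfFb⟩, rfl⟩ (mem_iInter₂.mp hmem _ (hq1 ⟨f, hfFb⟩))
      · rw [if_neg hrf]
        trivial
  obtain ⟨WT, hccT, hGT⟩ := extendUF UU hcc hfine (fun x => G (bij x)) hne
  have hGall : ∀ j, G j ∈ WT := by
    intro j
    have h := hGT (bij.symm j)
    rwa [Equiv.apply_symm_apply] at h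
  have hX : ∀ p, XX κ u p ∈ WT := fun p => hGall (Sum.inl p)
  have hbad : ∀ I : Set ((Order.succ κ).ord.ToType), #I = κ → (⋂ p ∈ I, XX κ u p) ∉ WT := by
    intro I hI
    obtain ⟨e⟩ := Cardinal.eq.mp ((mk_ord_toType κ).trans hI.symm)
    have hrange : range (fun b : κ.ord.ToType => ((e b : I) : (Order.succ κ).ord.ToType)) = I := by
      have h1 : range ((Subtype.val : I → (Order.succ κ).ord.ToType) ∘ e) =
          range (Subtype.val : I → (Order.succ κ).ord.ToType) := e.surjective.range_comp _
      rw [show (fun b : κ.ord.ToType => ((e b : I) : (Order.succ κ).ord.ToType)) =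
        (Subtype.val : I → (Order.succ κ).ord.ToType) ∘ e from rfl, h1, Subtype.range_coe]
    have hmem := hGall (Sum.inr (fun b : κ.ord.ToType => ((e b : I) : (Order.succ κ).ord.ToType)))
    rw [hGdef, Sum.elim_inr, if_pos (by rw [hrange]; exact hI), hrange] at hmem
    exact Ultrafilter.compl_mem_iff_notMem.mp hmem
  obtain ⟨eT⟩ := Cardinal.eq.mp ((mk_TT hκ hSL).trans (mk_ord_toType κ).symm)
  refine ⟨WT.map eT, ?_, ?_⟩
  · intro ι f hι hf
    rw [Ultrafilter.mem_map, preimage_iInter]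
    exact hccT ι _ hι fun i => Ultrafilter.mem_map.mp (hf i)
  · intro hgal
    have hpre : ∀ p, ⇑eT ⁻¹' (⇑eT.symm ⁻¹' (XX κ u p)) = XX κ u p := by
      intro p; ext t; simp
    obtain ⟨I, hI, hmem⟩ := hgal (fun p => ⇑eT.symm ⁻¹' (XX κ u p))
      (fun p => by rw [Ultrafilter.mem_map, hpre p]; exact hX p)
    apply hbad I hI
    rw [Ultrafilter.mem_map] at hmem
    have heq : ⇑eT ⁻¹' (⋂ p ∈ I, ⇑eT.symm ⁻¹' (XX κ u p)) = ⋂ p ∈ I, XX κ u p := by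
      rw [preimage_iInter₂]
      exact iInter₂_congr fun p _ => hpre p
    rwa [heq] at hmem


/-- if `κ` is `2^κ`-supercompact, then there is a `κ`-complete
ultrafilter over `κ` which fails the Galvin property `Gal(U, κ, κ⁺)`. -/
theorem stmt9 (κ : Cardinal.{0}) (hκ : ℵ₀ < κ)
    (hsc : IsSupercompact κ ((2 : Cardinal.{0}) ^ κ)) :
    ∃ W : Ultrafilter κ.ord.ToType, CComplete κ W ∧ ¬ Gal W κ (Order.succ κ) := by
  classical
  obtain ⟨UU, hcc, hfine, -⟩ := hsc
  have hKmk : #(κ.ord.ToType) = κ := mk_ord_toType κ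
  obtain ⟨m⟩ := (le_def κ.ord.ToType (((2 : Cardinal.{0}) ^ κ).ord.ToType)).mp
    (by rw [hKmk, mk_ord_toType]; exact (cantor κ).le)
  set G₀ : ((2 : Cardinal.{0}) ^ κ).ord.ToType → Set κ.ord.ToType :=
    fun x => {c | ∀ b, m b = x → c ≠ b} with hG₀def
  have hne₀ : ∀ s : Set (((2 : Cardinal.{0}) ^ κ).ord.ToType), #s < κ →
      (⋂ x ∈ s, G₀ x).Nonempty := by
    intro s hs
    have hpre : #(⇑m ⁻¹' s) < κ := lt_of_le_of_lt (mk_preimage_of_injective _ _ m.injective) hs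
    have hcne : (⇑m ⁻¹' s)ᶜ.Nonempty := by
      rcases eq_empty_or_nonempty ((⇑m ⁻¹' s)ᶜ) with h | h
      · exfalso
        rw [compl_empty_iff] at h
        rw [h, mk_univ, hKmk] at hpre
        exact lt_irrefl _ hpre
      · exact h
    obtain ⟨c, hc⟩ := hcne
    refine ⟨c, mem_iInter₂.mpr fun x hx => ?_⟩
    show ∀ b, m b = x → c ≠ b
    intro b hb hcb
    exact hc (show c ∈ ⇑m ⁻¹' s by rw [mem_preimage, hcb, hb]; exact hx)
  obtain ⟨W₀, hcc₀, hG₀mem⟩ := extendUF UU hcc hfine G₀ hne₀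
  have hcos : ∀ b : κ.ord.ToType, {c | c ≠ b} ∈ W₀ := fun b =>
    Filter.mem_of_superset (hG₀mem (m b)) fun c hcmem => hcmem b rfl
  exact mainUF κ hκ UU hcc hfine
    (fun ι g hι => exists_gt_of_small hκ W₀ hcc₀ hcos ι g hι)
    (fun c hc => two_power_lt hκ W₀ hcc₀ hcos hc)
end Aux
end

section
/- If ◊(κ) holds at a regular uncountable cardinal κ, then there exists a normal κ-independent family of subsets of κ of length 2^κ. -/
open Cardinal Set

/-- `C` is a club (closed unbounded set) in the regular cardinal `κ`, whose points are
realized as the elements of the well-ordered type `κ.ord.ToType`: `C` is unbounded and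
contains each of its limit points. -/
def IsClubIn {T : Type} [LinearOrder T] (C : Set T) : Prop :=
  (∀ a : T, ∃ b ∈ C, a < b) ∧
    ∀ a : T, (C ∩ Set.Iio a).Nonempty → IsLUB (C ∩ Set.Iio a) a → a ∈ C

/-- `S` is stationary: it meets every club. -/
def StatIn {T : Type} [LinearOrder T] (S : Set T) : Prop :=
  ∀ C : Set T, IsClubIn C → (S ∩ C).Nonempty

/-- The diamond principle `◊(κ)`: there is a sequence `⟨A_a : a < κ⟩` with `A_a ⊆ a`
guessing every subset of `κ` on a stationary set. -/
def DiamondOn (κ : Cardinal.{0}) : Prop :=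
  ∃ A : κ.ord.ToType → Set κ.ord.ToType,
    (∀ a, A a ⊆ Set.Iio a) ∧
      ∀ X : Set κ.ord.ToType, StatIn {a | X ∩ Set.Iio a = A a}

/-- `A` is a `κ`-independent family: for disjoint index sets `I, J` of size `< κ`, the
set `⋂_{i ∈ I} A_i ∩ ⋂_{j ∈ J} A_jᶜ` is nonempty. -/
def IndepFam (κ : Cardinal.{0}) {T ι : Type} (A : ι → Set T) : Prop :=
  ∀ I J : Set ι, Disjoint I J → #I < κ → #J < κ →
    ((⋂ i ∈ I, A i) ∩ ⋂ j ∈ J, (A j)ᶜ).Nonempty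

/-- `A` is a normal `κ`-independent family: it is `κ`-independent, and for any two
disjoint `κ`-indexed subcollections `⟨A_{a i} : i < κ⟩`, `⟨A_{b i} : i < κ⟩` the
diagonal intersection `Δ_{i<κ} (A_{a i} \ A_{b i}) = {ν : ∀ i < ν, ν ∈ A_{a i} \ A_{b i}}`
is stationary in `κ`. -/
def NormalIndepFam (κ : Cardinal.{0}) {T ι : Type} [LinearOrder T] (A : ι → Set T) :
    Prop :=
  IndepFam κ A ∧
    ∀ a b : T → ι, (∀ i j, a i ≠ b j) →
      StatIn {ν : T | ∀ i < ν, ν ∈ A (a i) \ A (b i)}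

section Helpers

variable {κ : Cardinal.{0}}

lemma mkT (κ : Cardinal.{0}) : #κ.ord.ToType = κ := by
  rw [mk_toType, card_ord]

lemma bdd (hreg : κ.IsRegular) (s : Set κ.ord.ToType) (h : #s < κ) :
    ∃ b : κ.ord.ToType, ∀ x ∈ s, x < b := by
  haveI : IsWellOrder κ.ord.ToType (· < ·) := isWellOrder_lt
  have h2 : #s < Ordinal.cof (Ordinal.type ((· < ·) : κ.ord.ToType → κ.ord.ToType → Prop)) := by
    rw [Ordinal.type_toType, hreg.cof_eq]; exact h
  by_contra hc; push_neg at hc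
  have hcof : IsCofinal s := fun a => by obtain ⟨x, hx, hax⟩ := hc a; exact ⟨x, hx, hax⟩
  exact absurd (Order.cof_le hcof) (not_le.2 (by rwa [Ordinal.cof_type] at h2))

lemma lub_ex (hreg : κ.IsRegular) (s : Set κ.ord.ToType) (h : #s < κ) :
    ∃ b : κ.ord.ToType, IsLUB s b := by
  obtain ⟨b0, hb0⟩ := bdd hreg s h
  have hne : (upperBounds s).Nonempty := ⟨b0, fun x hx => (hb0 x hx).le⟩
  obtain ⟨m, hm, hmin⟩ := (wellFounded_lt (α := κ.ord.ToType)).has_min _ hne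
  exact ⟨m, hm, fun c hc => not_lt.1 (hmin c hc)⟩



lemma club_master (hκ : ℵ₀ < κ) (hreg : κ.IsRegular) (D : Set κ.ord.ToType)
    (hD : IsClubIn D) (g : κ.ord.ToType → κ.ord.ToType → κ.ord.ToType) :
    IsClubIn (D ∩ {ν | ∀ x < ν, ∀ y < ν, g x y < ν}) := by
  classical
  constructor
  · -- unbounded
    intro a
    have step : ∀ c : κ.ord.ToType, ∃ d, c < d ∧ d ∈ D ∧ ∀ u < c, ∀ v < c, g u v < d := by
      intro c
      have hcard : #(↥((fun p : ↥(Iio c) × ↥(Iio c) => g p.1 p.2) '' univ)) < κ := by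
        refine lt_of_le_of_lt (mk_image_le) ?_
        simp only [mk_univ, mk_prod, lift_id]
        exact Cardinal.mul_lt_of_lt hκ.le (mk_Iio_ord_toType c) (mk_Iio_ord_toType c)
      obtain ⟨b, hb⟩ := bdd hreg _ hcard
      obtain ⟨d, hdD, hd⟩ := hD.1 (max b c)
      refine ⟨d, (le_max_right b c).trans_lt hd, hdD, fun u hu v hv => ?_⟩
      have : g u v < b := hb _ ⟨(⟨⟨u, hu⟩, ⟨v, hv⟩⟩ : ↥(Iio c) × ↥(Iio c)), mem_univ _, rfl⟩
      exact this.trans_le ((le_max_left b c).trans hd.le)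
    choose F hF1 hF2 hF3 using step
    set x : ℕ → κ.ord.ToType := fun n => F^[n + 1] a with hx
    have hxsucc : ∀ n, x (n + 1) = F (x n) := by
      intro n; simp only [hx]; rw [Function.iterate_succ_apply']
    have hmono : StrictMono x := strictMono_nat_of_lt_succ (fun n => by
      rw [hxsucc]; exact hF1 (x n))
    have hxD : ∀ n, x n ∈ D := by
      intro n; cases n with
      | zero => exact hF2 a
      | succ m => rw [hxsucc]; exact hF2 (x m)
    obtain ⟨ν, hν⟩ := lub_ex hreg (range x)
      (lt_of_le_of_lt mk_range_le (by rw [mk_nat]; exact hκ))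
    have hxlt : ∀ n, x n < ν := fun n =>
      (hmono (Nat.lt_succ_self n)).trans_le (hν.1 ⟨n + 1, rfl⟩)
    have hνcl : ∀ u < ν, ∀ v < ν, g u v < ν := by
      intro u hu v hv
      have h1 : ∃ n, u < x n := by
        by_contra hc; push_neg at hc
        exact absurd (hν.2 (fun z ⟨n, hn⟩ => hn ▸ hc n)) (not_le.2 hu)
      have h2 : ∃ n, v < x n := by
        by_contra hc; push_neg at hc
        exact absurd (hν.2 (fun z ⟨n, hn⟩ => hn ▸ hc n)) (not_le.2 hv)
      obtain ⟨n, hn⟩ := h1; obtain ⟨m, hm⟩ := h2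
      have hu' : u < x (max n m) := hn.trans_le (hmono.monotone (le_max_left n m))
      have hv' : v < x (max n m) := hm.trans_le (hmono.monotone (le_max_right n m))
      have : g u v < x (max n m + 1) := by rw [hxsucc]; exact hF3 _ u hu' v hv'
      exact this.trans (hxlt _)
    have hνD : ν ∈ D := by
      refine hD.2 ν ⟨x 0, hxD 0, hxlt 0⟩ ⟨fun z hz => hz.2.le, fun c hc => ?_⟩
      exact hν.2 (fun z ⟨n, hn⟩ => hn ▸ hc ⟨hxD n, hxlt n⟩)
    exact ⟨ν, ⟨hνD, hνcl⟩, lt_trans (hF1 a) (hxlt 0)⟩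
  · -- closed
    intro a hne hlub
    have hsub : (D ∩ {ν | ∀ x < ν, ∀ y < ν, g x y < ν}) ∩ Iio a ⊆ D ∩ Iio a :=
      fun z hz => ⟨hz.1.1, hz.2⟩
    constructor
    · refine hD.2 a (hne.mono hsub) ⟨fun z hz => hz.2.le, fun c hc => ?_⟩
      exact hlub.2 (fun z hz => hc (hsub hz))
    · intro u hu v hv
      have hnub : ¬ (max u v ∈ upperBounds ((D ∩ {ν | ∀ x < ν, ∀ y < ν, g x y < ν}) ∩ Iio a)) := by
        intro hc
        exact absurd (hlub.2 hc) (not_le.2 (max_lt hu hv))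
      rw [upperBounds, mem_setOf_eq] at hnub
      push_neg at hnub
      obtain ⟨z, hz, hzgt⟩ := hnub
      exact (hz.1.2 u (lt_of_le_of_lt (le_max_left u v) hzgt) v
        (lt_of_le_of_lt (le_max_right u v) hzgt)).trans hz.2

lemma club_Ioi (hκ : ℵ₀ < κ) (μ : κ.ord.ToType) : IsClubIn (Ioi μ) := by
  haveI : NoMaxOrder κ.ord.ToType := Cardinal.noMaxOrder hκ.le
  constructor
  · intro a
    obtain ⟨b, hb⟩ := exists_gt (max a μ)
    exact ⟨b, (le_max_right a μ).trans_lt hb, (le_max_left a μ).trans_lt hb⟩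
  · rintro a ⟨z, hz1, hz2⟩ _
    exact (Set.mem_Ioi.1 hz1).trans (Set.mem_Iio.1 hz2)

noncomputable def famA (κ : Cardinal.{0}) (W : κ.ord.ToType → Set κ.ord.ToType)
    (q : κ.ord.ToType ≃ κ.ord.ToType × κ.ord.ToType × Bool) (s : Set κ.ord.ToType) :
    Set κ.ord.ToType :=
  {ν | (∃ i < ν, ∀ x < ν, (x ∈ s ↔ q.symm (i, x, false) ∈ W ν)) ∧
       ∀ j < ν, ∃ x < ν, ¬(x ∈ s ↔ q.symm (j, x, true) ∈ W ν)}

lemma core_s11 (hκ : ℵ₀ < κ) (hreg : κ.IsRegular) (W : κ.ord.ToType → Set κ.ord.ToType)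
    (hW : ∀ X : Set κ.ord.ToType, StatIn {a | X ∩ Set.Iio a = W a})
    (q : κ.ord.ToType ≃ κ.ord.ToType × κ.ord.ToType × Bool)
    (a b : κ.ord.ToType → Set κ.ord.ToType) (hab : ∀ i j, a i ≠ b j) :
    StatIn {ν | ∀ i < ν, ν ∈ famA κ W q (a i) \ famA κ W q (b i)} := by
  classical
  have hf : ∀ i j, ∃ x, ¬(x ∈ a i ↔ x ∈ b j) := by
    intro i j
    by_contra hc; push_neg at hc
    exact hab i j (Set.ext fun x => hc x)
  choose f hfp using hf
  intro D hD
  set Y : Set κ.ord.ToType :=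
    {z | ((q z).2.2 = false ∧ (q z).2.1 ∈ a (q z).1) ∨
         ((q z).2.2 = true ∧ (q z).2.1 ∈ b (q z).1)} with hY
  set g : κ.ord.ToType → κ.ord.ToType → κ.ord.ToType :=
    fun u v => max (max (f u v) (q.symm (u, v, false))) (q.symm (u, v, true)) with hg
  obtain ⟨ν, hνG, hνD, hνcl⟩ := hW Y _ (club_master hκ hreg D hD g)
  refine ⟨ν, ?_, hνD⟩
  simp only [mem_setOf_eq] at hνG hνcl ⊢
  have hkey : ∀ j x (c : Bool), j < ν → x < ν →
      (q.symm (j, x, c) ∈ W ν ↔ ((c = false ∧ x ∈ a j) ∨ (c = true ∧ x ∈ b j))) := by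
    intro j x c hj hx
    have hlt : q.symm (j, x, c) < ν := by
      have := hνcl j hj x hx
      cases c
      · exact lt_of_le_of_lt ((le_max_right _ _).trans (le_max_left _ _)) this
      · exact lt_of_le_of_lt (le_max_right _ _) this
    rw [← hνG]
    constructor
    · intro h
      have := h.1
      rw [hY, mem_setOf_eq, Equiv.apply_symm_apply] at this
      exact this
    · intro h
      refine ⟨?_, hlt⟩
      rw [hY, mem_setOf_eq, Equiv.apply_symm_apply]
      exact h
  have hflt : ∀ u v, u < ν → v < ν → f u v < ν := by
    intro u v hu hv
    exact lt_of_le_of_lt ((le_max_left _ _).trans (le_max_left _ _)) (hνcl u hu v hv)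
  intro i hi
  constructor
  · refine ⟨⟨i, hi, fun x hx => ?_⟩, fun j hj => ⟨f i j, hflt i j hi hj, ?_⟩⟩
    · rw [hkey i x false hi hx]; simp
    · rw [hkey j (f i j) true hj (hflt i j hi hj)]
      simp only [Bool.true_eq_false, false_and, true_and, false_or]
      exact hfp i j
  · rintro ⟨⟨i', hi', hall⟩, -⟩
    have h1 := hall (f i' i) (hflt i' i hi' hi)
    rw [hkey i' (f i' i) false hi' (hflt i' i hi' hi)] at h1
    simp only [Bool.false_eq_true, false_and, or_false, true_and] at h1
    exact hfp i' i (h1.symm)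

lemma exists_notMem (hκ : ℵ₀ < κ) (s : Set (Set κ.ord.ToType)) (hs : #s < κ) :
    ∃ u, u ∉ s := by
  by_contra hc; push_neg at hc
  have h2 : s = Set.univ := eq_univ_of_forall hc
  rw [h2, mk_univ, mk_set, mkT] at hs
  exact absurd hs (not_lt.2 (Cardinal.cantor κ).le)

lemma exists_surjOn (hreg : κ.IsRegular) (s : Set (Set κ.ord.ToType)) (hne : s.Nonempty)
    (hs : #s < κ) :
    ∃ a : κ.ord.ToType → Set κ.ord.ToType, (∀ t, a t ∈ s) ∧ ∀ u ∈ s, ∃ t, a t = u := by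
  classical
  have hle : #s ≤ #κ.ord.ToType := by rw [mkT]; exact hs.le
  obtain ⟨j⟩ := Cardinal.le_def _ _ |>.1 hle
  obtain ⟨u0, hu0⟩ := hne
  refine ⟨fun t => if h : ∃ y : ↥s, j y = t then (Classical.choose h : ↥s).1 else u0, ?_, ?_⟩
  · intro t
    by_cases h : ∃ y : ↥s, j y = t
    · simp only [h, dif_pos]; exact (Classical.choose h).2
    · simp only [h, dif_neg, not_false_iff]; exact hu0
  · intro u hu
    refine ⟨j ⟨u, hu⟩, ?_⟩
    have h : ∃ y : ↥s, j y = j ⟨u, hu⟩ := ⟨⟨u, hu⟩, rfl⟩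
    simp only [h, dif_pos]
    have := j.injective (Classical.choose_spec h)
    rw [this]

lemma mk_TTB (hκ : ℵ₀ < κ) :
    #(κ.ord.ToType × κ.ord.ToType × Bool) = κ := by
  have h2 : (2 : Cardinal) ≤ κ := by
    have := (Cardinal.nat_lt_aleph0 2).le.trans hκ.le
    exact_mod_cast this
  simp only [mk_prod, lift_id, mk_bool, mkT]
  rw [Cardinal.mul_eq_left hκ.le h2 two_ne_zero, Cardinal.mul_eq_self hκ.le]


end Helpers

/-- if the diamond principle holds at a regular uncountable cardinal
`κ`, then there is a normal `κ`-independent family of subsets of `κ` of length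
`2^κ`. -/
theorem stmt11 (κ : Cardinal.{0}) (hκ : ℵ₀ < κ) (hreg : κ.IsRegular)
    (hdia : DiamondOn κ) :
    ∃ A : ((2 : Cardinal.{0}) ^ κ).ord.ToType → Set κ.ord.ToType, NormalIndepFam κ A := by
  classical
  obtain ⟨W, hWsub, hW⟩ := hdia
  obtain ⟨q⟩ : Nonempty (κ.ord.ToType ≃ κ.ord.ToType × κ.ord.ToType × Bool) :=
    Cardinal.eq.1 (by rw [mkT, mk_TTB hκ])
  obtain ⟨e⟩ : Nonempty (((2 : Cardinal.{0}) ^ κ).ord.ToType ≃ Set κ.ord.ToType) :=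
    Cardinal.eq.1 (by rw [mkT, mk_set, mkT])
  refine ⟨fun i => famA κ W q (e i), ?_, ?_⟩
  · -- independence
    intro I J hdisj hI hJ
    have hI' : #↥(e '' I) < κ := lt_of_le_of_lt mk_image_le hI
    have hJ' : #↥(e '' J) < κ := lt_of_le_of_lt mk_image_le hJ
    have hIJ' : Disjoint (e '' I) (e '' J) :=
      (Set.disjoint_image_iff e.injective).2 hdisj
    have hUcard : #↥(e '' I ∪ e '' J) < κ :=
      lt_of_le_of_lt (mk_union_le _ _) (Cardinal.add_lt_of_lt hκ.le hI' hJ')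
    obtain ⟨u0, hu0⟩ := exists_notMem hκ _ hUcard
    have hU2card : #↥(e '' I ∪ e '' J ∪ {u0}) < κ := by
      refine lt_of_le_of_lt (mk_union_le _ _) (Cardinal.add_lt_of_lt hκ.le hUcard ?_)
      rw [mk_singleton]; exact one_lt_aleph0.trans hκ
    obtain ⟨u1, hu1⟩ := exists_notMem hκ _ hU2card
    set Ka : Set (Set κ.ord.ToType) := insert u0 (e '' I) with hKa
    set Kb : Set (Set κ.ord.ToType) := insert u1 (e '' J) with hKb
    have hKacard : #↥Ka < κ := by
      refine lt_of_le_of_lt (mk_insert_le) (Cardinal.add_lt_of_lt hκ.le hI' ?_)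
      exact one_lt_aleph0.trans hκ
    have hKbcard : #↥Kb < κ := by
      refine lt_of_le_of_lt (mk_insert_le) (Cardinal.add_lt_of_lt hκ.le hJ' ?_)
      exact one_lt_aleph0.trans hκ
    have hKab : ∀ x ∈ Ka, x ∉ Kb := by
      rintro x (rfl | hx) (h | h)
      · exact hu1 (mem_union_right _ (h ▸ rfl))
      · exact hu0 (mem_union_right _ h)
      · exact hu1 (mem_union_left _ (mem_union_left _ (h ▸ hx)))
      · exact (hIJ'.ne_of_mem hx h) rfl
    obtain ⟨a, haK, hasurj⟩ := exists_surjOn hreg Ka ⟨u0, mem_insert _ _⟩ hKacard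
    obtain ⟨b, hbK, hbsurj⟩ := exists_surjOn hreg Kb ⟨u1, mem_insert _ _⟩ hKbcard
    have hab : ∀ i j, a i ≠ b j := fun i j h => hKab _ (haK i) (h ▸ hbK j)
    have hS := core_s11 hκ hreg W hW q a b hab
    choose tA htA using fun (u : ↥Ka) => hasurj u u.2
    choose tB htB using fun (u : ↥Kb) => hbsurj u u.2
    have hP : #↥(range tA ∪ range tB) < κ := by
      refine lt_of_le_of_lt (mk_union_le _ _) (Cardinal.add_lt_of_lt hκ.le ?_ ?_)
      · exact lt_of_le_of_lt mk_range_le hKacard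
      · exact lt_of_le_of_lt mk_range_le hKbcard
    obtain ⟨μ, hμ⟩ := bdd hreg _ hP
    obtain ⟨ν, hνS, hνμ⟩ := hS (Ioi μ) (club_Ioi hκ μ)
    simp only [mem_setOf_eq] at hνS
    refine ⟨ν, ?_, ?_⟩
    · rw [mem_iInter₂]
      intro i hi
      have hmem : e i ∈ Ka := mem_insert_of_mem _ (mem_image_of_mem e hi)
      have ht : tA ⟨e i, hmem⟩ < ν :=
        lt_trans (hμ _ (mem_union_left _ (mem_range_self _))) hνμ
      have h2 := (hνS _ ht).1
      rwa [htA ⟨e i, hmem⟩] at h2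
    · rw [mem_iInter₂]
      intro j hj
      have hmem : e j ∈ Kb := mem_insert_of_mem _ (mem_image_of_mem e hj)
      have ht : tB ⟨e j, hmem⟩ < ν :=
        lt_trans (hμ _ (mem_union_right _ (mem_range_self _))) hνμ
      have h2 := (hνS _ ht).2
      rw [htB ⟨e j, hmem⟩] at h2
      exact h2
  · intro a0 b0 hab0
    exact core_s11 hκ hreg W hW q (fun i => e (a0 i)) (fun i => e (b0 i))
      (fun i j h => hab0 i j (e.injective h))
end

section
/- If ◊(κ) holds at a regular uncountable cardinal κ, then there exists a κ-complete filter F on κ extending the club filter such that Gal(F, κ, κ⁺) fails. -/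
open Cardinal Set

/-- `F` is a (proper) `κ`-complete filter on `κ`. -/
def IsCFilter (κ : Cardinal.{0}) {T : Type} (F : Set (Set T)) : Prop :=
  Set.univ ∈ F ∧ ∅ ∉ F ∧ (∀ X ∈ F, ∀ Y : Set T, X ⊆ Y → Y ∈ F) ∧
    ∀ (ι : Type) (f : ι → Set T), #ι < κ → (∀ i, f i ∈ F) → (⋂ i, f i) ∈ F

/-- The Galvin property `Gal(F, κ, lam)` for a filter `F` given as a family of sets. -/
def GalF (κ lam : Cardinal.{0}) {T : Type} (F : Set (Set T)) : Prop :=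
  ∀ A : lam.ord.ToType → Set T, (∀ i, A i ∈ F) →
    ∃ I : Set lam.ord.ToType, #I = κ ∧ (⋂ i ∈ I, A i) ∈ F


section AuxStmt13

instance (o : Ordinal.{0}) : IsWellOrder o.ToType (· < ·) := isWellOrder_lt

variable {κ : Cardinal.{0}}

lemma bdd_of_small (hreg : κ.IsRegular) (s : Set κ.ord.ToType) (hs : #s < κ) :
    ∃ b, ∀ x ∈ s, x < b := by
  have hc : #s < Order.cof κ.ord.ToType := by
    rwa [Ordinal.cof_toType, hreg.cof_ord]
  by_contra h
  push_neg at h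
  exact absurd (Order.cof_le (s := s) h) (not_le.2 hc)

lemma univ_club (hκ : ℵ₀ < κ) (hreg : κ.IsRegular) :
    IsClubIn (Set.univ : Set κ.ord.ToType) := by
  constructor
  · intro a
    obtain ⟨b, hb⟩ := bdd_of_small hreg {a} (by simpa using hκ.trans_le' (by simp))
    · exact ⟨b, trivial, hb a rfl⟩
  · intro a _ _; trivial

lemma club_inter_Ioi {C : Set κ.ord.ToType} (hC : IsClubIn C) (b : κ.ord.ToType) :
    IsClubIn (C ∩ Set.Ioi b) := by
  constructor
  · intro a
    obtain ⟨c, hcC, hc⟩ := hC.1 (max a b)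
    exact ⟨c, ⟨hcC, lt_of_le_of_lt (le_max_right a b) hc⟩, lt_of_le_of_lt (le_max_left a b) hc⟩
  · rintro a ⟨x, ⟨hxC, hxb⟩, hxa⟩ hlub
    have hsub : C ∩ Set.Ioi b ∩ Set.Iio a ⊆ C ∩ Set.Iio a := fun y hy => ⟨hy.1.1, hy.2⟩
    have haC : a ∈ C := by
      apply hC.2 a ⟨x, hxC, hxa⟩
      constructor
      · intro y hy; exact le_of_lt hy.2
      · intro u hu
        exact hlub.2 fun y hy => hu (hsub hy)
    exact ⟨haC, (lt_trans hxb hxa : b < a)⟩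

lemma club_iInter (hκ : ℵ₀ < κ) (hreg : κ.IsRegular) {ι : Type} (f : ι → Set κ.ord.ToType)
    (hι : #ι < κ) (hf : ∀ i, IsClubIn (f i)) : IsClubIn (⋂ i, f i) := by
  rcases isEmpty_or_nonempty ι with hE | hNE
  · rw [Set.iInter_of_empty]; exact univ_club hκ hreg
  constructor
  · -- unboundedness
    intro a
    have hg : ∀ i (x : κ.ord.ToType), ∃ y, y ∈ f i ∧ x < y := by
      intro i x
      obtain ⟨y, hy, hxy⟩ := (hf i).1 x
      exact ⟨y, hy, hxy⟩
    choose g hg1 hg2 using hg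
    have hstep : ∀ x : κ.ord.ToType, ∃ b, ∀ y ∈ insert x (Set.range fun i => g i x), y < b := by
      intro x
      apply bdd_of_small hreg
      apply lt_of_le_of_lt (Cardinal.mk_insert_le ..)
      have h1 : (1 : Cardinal) < κ := lt_of_lt_of_le Cardinal.one_lt_aleph0 hκ.le
      exact Cardinal.add_lt_of_lt hreg.aleph0_le (lt_of_le_of_lt Cardinal.mk_range_le hι) h1
    choose h hh using hstep
    set x : ℕ → κ.ord.ToType := fun n => Nat.rec a (fun _ xn => h xn) n with hxdef
    have hxsucc : ∀ n, x (n + 1) = h (x n) := fun n => rfl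
    have hxlt : ∀ n, x n < x (n + 1) := by
      intro n; rw [hxsucc]; exact hh (x n) _ (Set.mem_insert _ _)
    have hglt : ∀ i n, x n < g i (x n) ∧ g i (x n) < x (n + 1) := by
      intro i n
      refine ⟨hg2 i (x n), ?_⟩
      rw [hxsucc]; exact hh (x n) _ (Set.mem_insert_of_mem _ ⟨i, rfl⟩)
    have hbddU : {u | ∀ n, x n ≤ u}.Nonempty := by
      obtain ⟨b, hb⟩ := bdd_of_small hreg (Set.range x)
        (lt_of_le_of_lt Cardinal.mk_range_le (by simpa using hκ))
      exact ⟨b, fun n => (hb _ ⟨n, rfl⟩).le⟩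
    set m := (wellFounded_lt (α := κ.ord.ToType)).min _ hbddU with hm
    have hmU : ∀ n, x n ≤ m := (wellFounded_lt (α := κ.ord.ToType)).min_mem _ hbddU
    have hmmin : ∀ u, (∀ n, x n ≤ u) → m ≤ u := by
      intro u hu
      by_contra hcon
      exact (wellFounded_lt (α := κ.ord.ToType)).not_lt_min {u | ∀ n, x n ≤ u} (x := u) hu (not_le.1 hcon)
    have hgm : ∀ i n, g i (x n) < m := fun i n => lt_of_lt_of_le (hglt i n).2 (hmU (n + 1))
    have hmem : m ∈ ⋂ i, f i := by
      refine Set.mem_iInter.2 fun i => ?_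
      apply (hf i).2 m ⟨g i (x 0), hg1 i (x 0), hgm i 0⟩
      constructor
      · intro y hy; exact hy.2.le
      · intro u hu
        apply hmmin
        intro n
        exact le_trans (hglt i n).1.le (hu ⟨hg1 i (x n), hgm i n⟩)
    refine ⟨m, hmem, ?_⟩
    calc a = x 0 := rfl
    _ < x 1 := hxlt 0
    _ ≤ m := hmU 1
  · -- closedness
    intro a hne hlub
    refine Set.mem_iInter.2 fun i => ?_
    obtain ⟨y, hy⟩ := hne
    apply (hf i).2 a ⟨y, Set.mem_iInter.1 hy.1 i, hy.2⟩
    constructor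
    · intro z hz; exact hz.2.le
    · intro u hu
      exact hlub.2 fun z hz => hu ⟨Set.mem_iInter.1 hz.1 i, hz.2⟩

end AuxStmt13

/-- if `◊(κ)` holds at a regular uncountable cardinal `κ`, then there
is a `κ`-complete filter on `κ` extending the club filter which fails the Galvin
property `Gal(F, κ, κ⁺)`. -/
theorem stmt13 (κ : Cardinal.{0}) (hκ : ℵ₀ < κ) (hreg : κ.IsRegular)
    (hdia : DiamondOn κ) :
    ∃ F : Set (Set κ.ord.ToType), IsCFilter κ F ∧
      (∀ C : Set κ.ord.ToType, IsClubIn C → C ∈ F) ∧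
      ¬ GalF κ (Order.succ κ) F := by
  obtain ⟨D, hDsub, hDstat⟩ := hdia
  -- cardinality facts
  have hmkT : #(κ.ord.ToType) = κ := by rw [Cardinal.mk_toType, Cardinal.card_ord]
  have hmkε : #((Order.succ κ).ord.ToType) = Order.succ κ := by
    rw [Cardinal.mk_toType, Cardinal.card_ord]
  -- an injection from the index type into sets
  have hle : #((Order.succ κ).ord.ToType) ≤ #(Set κ.ord.ToType) := by
    rw [hmkε, Cardinal.mk_set, hmkT]
    exact Order.succ_le_of_lt (Cardinal.cantor κ)
  obtain ⟨X⟩ := Cardinal.le_def _ _ |>.1 hle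
  set S : (Order.succ κ).ord.ToType → Set κ.ord.ToType :=
    fun i => {a | X i ∩ Set.Iio a = D a} with hS
  have hstat : ∀ i, StatIn (S i) := fun i => hDstat (X i)
  have halmost : ∀ i j, i ≠ j → ∃ t, ∀ x ∈ S i ∩ S j, x ≤ t := by
    intro i j hij
    have hXij : X i ≠ X j := fun h => hij (X.injective h)
    obtain ⟨t, ht⟩ : ∃ t, ¬ (t ∈ X i ↔ t ∈ X j) := by
      by_contra hcon
      push_neg at hcon
      exact hXij (Set.ext fun t => hcon t)
    refine ⟨t, fun x ⟨hxi, hxj⟩ => ?_⟩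
    by_contra hcon
    have htx : t < x := not_le.1 hcon
    apply ht
    constructor
    · intro h
      have : t ∈ D x := by rw [← hxi]; exact ⟨h, htx⟩
      rw [← hxj] at this; exact this.1
    · intro h
      have : t ∈ D x := by rw [← hxj]; exact ⟨h, htx⟩
      rw [← hxi] at this; exact this.1
  -- the core density lemma
  have core : ∀ C : Set κ.ord.ToType, IsClubIn C →
      ∀ J : Set ((Order.succ κ).ord.ToType), #J < κ → ∀ i, i ∉ J →
      ∃ x, x ∈ C ∧ x ∈ S i ∧ ∀ j ∈ J, x ∉ S j := by
    intro C hC J hJ i hiJ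
    have htf : ∀ j : J, ∃ t, ∀ x ∈ S i ∩ S j.1, x ≤ t := by
      intro j
      exact halmost i j.1 (fun h => hiJ (h ▸ j.2))
    choose tf htf using htf
    obtain ⟨b, hb⟩ := bdd_of_small hreg (Set.range tf)
      (lt_of_le_of_lt Cardinal.mk_range_le hJ)
    obtain ⟨x, hxS, hxC, hxb⟩ := hstat i (C ∩ Set.Ioi b) (club_inter_Ioi hC b)
    refine ⟨x, hxC, hxS, fun j hjJ hxj => ?_⟩
    have h1 : x ≤ tf ⟨j, hjJ⟩ := htf ⟨j, hjJ⟩ x ⟨hxS, hxj⟩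
    have h2 : tf ⟨j, hjJ⟩ < b := hb _ ⟨⟨j, hjJ⟩, rfl⟩
    exact absurd (lt_of_le_of_lt h1 h2) (not_lt.2 hxb.le)
  -- the filter
  refine ⟨{Y | ∃ C, IsClubIn C ∧ ∃ J : Set ((Order.succ κ).ord.ToType), #J < κ ∧
      C ∩ ⋂ j ∈ J, (S j)ᶜ ⊆ Y}, ⟨?_, ?_, ?_, ?_⟩, ?_, ?_⟩
  · -- univ ∈ F
    exact ⟨Set.univ, univ_club hκ hreg, ∅,
      by rw [Cardinal.mk_emptyCollection]; exact hreg.pos, Set.subset_univ _⟩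
  · -- ∅ ∉ F
    rintro ⟨C, hC, J, hJ, hsub⟩
    obtain ⟨i, hiJ⟩ : ∃ i, i ∉ J := by
      by_contra hcon
      push_neg at hcon
      have : Set.univ ⊆ J := fun i _ => hcon i
      have h2 := Cardinal.mk_le_mk_of_subset this
      rw [Cardinal.mk_univ, hmkε] at h2
      exact absurd ((Order.lt_succ κ).trans_le (h2.trans hJ.le)) (lt_irrefl κ)
    obtain ⟨x, hxC, hxS, hxnot⟩ := core C hC J hJ i hiJ
    exact hsub ⟨hxC, Set.mem_iInter₂.2 fun j hj => hxnot j hj⟩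
  · -- upward closed
    rintro Y ⟨C, hC, J, hJ, hsub⟩ Z hYZ
    exact ⟨C, hC, J, hJ, hsub.trans hYZ⟩
  · -- κ-complete
    intro ι f hι hf
    choose C hC J hJ hsub using hf
    refine ⟨⋂ i, C i, club_iInter hκ hreg C hι hC, ⋃ i, J i, ?_, ?_⟩
    · apply lt_of_le_of_lt (Cardinal.mk_iUnion_le J)
      exact Cardinal.mul_lt_of_lt hreg.aleph0_le hι
        (Cardinal.iSup_lt_of_isRegular hreg hι hJ)
    · rintro x ⟨hx1, hx2⟩
      refine Set.mem_iInter.2 fun i => ?_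
      apply hsub i
      refine ⟨Set.mem_iInter.1 hx1 i, Set.mem_iInter₂.2 fun j hj => ?_⟩
      exact Set.mem_iInter₂.1 hx2 j (Set.mem_iUnion.2 ⟨i, hj⟩)
  · -- extends the club filter
    intro C hC
    exact ⟨C, hC, ∅, by rw [Cardinal.mk_emptyCollection]; exact hreg.pos,
      fun x hx => hx.1⟩
  · -- failure of Galvin
    intro hGal
    obtain ⟨I, hIcard, hIF⟩ := hGal (fun i => (S i)ᶜ) (by
      intro i
      refine ⟨Set.univ, univ_club hκ hreg, {i},
        by rw [Cardinal.mk_singleton]; exact Cardinal.one_lt_aleph0.trans hκ,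
        fun x hx => ?_⟩
      exact Set.mem_iInter₂.1 hx.2 i rfl)
    obtain ⟨C, hC, J, hJ, hsub⟩ := hIF
    obtain ⟨i₀, hi₀I, hi₀J⟩ : ∃ i, i ∈ I ∧ i ∉ J := by
      by_contra hcon
      push_neg at hcon
      have h2 := Cardinal.mk_le_mk_of_subset hcon
      rw [hIcard] at h2
      exact absurd (h2.trans_lt hJ) (lt_irrefl κ)
    obtain ⟨x, hxC, hxS, hxnot⟩ := core C hC J hJ i₀ hi₀J
    have hx : x ∈ ⋂ i ∈ I, (S i)ᶜ :=
      hsub ⟨hxC, Set.mem_iInter₂.2 fun j hj => hxnot j hj⟩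
    exact (Set.mem_iInter₂.1 hx i₀ hi₀I) hxS
end

section
/- Let ⟨A_i : i < κ⁺⟩ be a normal κ-independent family of subsets of κ and let F = {X ⊆ κ : ∃ club C ⊆ κ, ∃ I ∈ [κ⁺]^{<κ}, C ∩ ⋂_{i∈I} A_i ⊆ X}. Then F is a κ-complete filter extending the club filter, and for every I ∈ [κ⁺]^κ, ⋂_{i∈I} A_i ∉ F. -/
open Cardinal Set

/-- Any subset of `κ.ord.ToType` of size `< κ` is strictly bounded, for `κ` regular. -/
lemma my_bounded_aux {κ : Cardinal.{0}} (hreg : κ.IsRegular) (S : Set κ.ord.ToType)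
    (hS : #S < κ) : ∃ δ : κ.ord.ToType, ∀ s ∈ S, s < δ :=
  by
    by_contra h
    push_neg at h
    refine absurd (Order.cof_le (s := S) fun a => ?_)
      (not_le.2 (by rw [Ordinal.cof_toType, hreg.cof_eq]; exact hS))
    obtain ⟨s, hs, h'⟩ := h a
    exact ⟨s, hs, h'⟩

lemma my_bounded_fun {κ : Cardinal.{0}} (hreg : κ.IsRegular) {α : Type}
    (f : α → κ.ord.ToType) (hα : #α < κ) : ∃ δ : κ.ord.ToType, ∀ x, f x < δ := by
  obtain ⟨δ, hδ⟩ := my_bounded_aux hreg (Set.range f) (lt_of_le_of_lt Cardinal.mk_range_le hα)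
  exact ⟨δ, fun x => hδ _ (Set.mem_range_self x)⟩

/-- Any bounded set in a well-ordered type has a least upper bound. -/
lemma my_exists_isLUB {T : Type*} [LinearOrder T] [WellFoundedLT T] (s : Set T)
    (hbd : ∃ b, ∀ x ∈ s, x ≤ b) : ∃ a, IsLUB s a := by
  obtain ⟨a, ha, hmin⟩ := (wellFounded_lt (α := T)).has_min {b | ∀ x ∈ s, x ≤ b} hbd
  exact ⟨a, ha, fun b hb => not_lt.1 fun h' => hmin b hb h'⟩

lemma my_isClubIn_univ {κ : Cardinal.{0}} (hκ : ℵ₀ ≤ κ) :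
    IsClubIn (Set.univ : Set κ.ord.ToType) := by
  haveI := Cardinal.noMaxOrder hκ
  haveI : Nonempty κ.ord.ToType := by
    rw [Ordinal.toType_nonempty_iff_ne_zero, ne_eq, Cardinal.ord_eq_zero]
    rintro rfl; exact Cardinal.aleph0_ne_zero (by simpa using hκ)
  exact ⟨fun a => (exists_gt a).imp fun b hb => ⟨trivial, hb⟩, fun a _ _ => trivial⟩

/-- The intersection of fewer than `κ` clubs in `κ` is a club, for `κ` regular
uncountable. -/
lemma my_isClubIn_iInter {κ : Cardinal.{0}} (hκ : ℵ₀ < κ) (hreg : κ.IsRegular)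
    {ι : Type} (f : ι → Set κ.ord.ToType) (hι : #ι < κ)
    (hf : ∀ i, IsClubIn (f i)) : IsClubIn (⋂ i, f i) := by
  cases isEmpty_or_nonempty ι with
  | inl h => rw [Set.iInter_of_empty]; exact my_isClubIn_univ hreg.aleph0_le
  | inr h =>
  constructor
  · -- unboundedness
    intro a
    have hc : ∀ x : κ.ord.ToType, ∀ i : ι, ∃ c ∈ f i, x < c := fun x i => (hf i).1 x
    choose c hcmem hclt using hc
    have hg : ∀ x : κ.ord.ToType, ∃ y, ∀ i, c x i < y := fun x =>
      my_bounded_fun hreg (c x) hι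
    choose g hg using hg
    have hxg : ∀ x, x < g x := fun x => (hclt x h.some).trans (hg x h.some)
    set x : ℕ → κ.ord.ToType := fun n => g^[n] a with hx
    have hxs : ∀ n, x (n+1) = g (x n) := fun n => Function.iterate_succ_apply' g n a
    have hmono : StrictMono x := strictMono_nat_of_lt_succ fun n => by
      rw [hxs]; exact hxg (x n)
    have hbd : ∃ b, ∀ y ∈ Set.range x, y ≤ b := by
      obtain ⟨δ, hδ⟩ := my_bounded_fun hreg x (lt_of_le_of_lt (Cardinal.mk_le_aleph0) hκ)
      exact ⟨δ, fun y ⟨n, hn⟩ => hn ▸ (hδ n).le⟩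
    obtain ⟨a', ha'⟩ := my_exists_isLUB (Set.range x) hbd
    refine ⟨a', Set.mem_iInter.2 fun i => ?_, ?_⟩
    · have hlt : ∀ n, c (x n) i < a' := fun n =>
        lt_of_lt_of_le ((hg (x n) i).trans_le (le_of_eq (hxs n).symm)) (ha'.1 ⟨n+1, rfl⟩)
      refine (hf i).2 a' ⟨c (x 0) i, hcmem (x 0) i, hlt 0⟩ ⟨fun y hy => hy.2.le, ?_⟩
      intro b hb
      refine ha'.2 fun y ⟨n, hn⟩ => hn ▸ ?_
      exact le_trans (hclt (x n) i).le (hb ⟨hcmem (x n) i, hlt n⟩)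
    · exact lt_of_lt_of_le (hxg a) (ha'.1 ⟨1, rfl⟩)
  · -- closedness
    intro a hne hlub
    refine Set.mem_iInter.2 fun i => ?_
    have hsub : (⋂ j, f j) ∩ Set.Iio a ⊆ f i ∩ Set.Iio a := fun y hy =>
      ⟨Set.mem_iInter.1 hy.1 i, hy.2⟩
    refine (hf i).2 a (hne.mono hsub) ⟨fun y hy => hy.2.le, fun b hb => ?_⟩
    exact hlub.2 fun y hy => hb (hsub hy)

lemma my_isClubIn_Ioi {κ : Cardinal.{0}} (hκ : ℵ₀ ≤ κ) (δ : κ.ord.ToType) :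
    IsClubIn (Set.Ioi δ) := by
  haveI := Cardinal.noMaxOrder hκ
  constructor
  · intro a
    obtain ⟨b, hb⟩ := exists_gt (max a δ)
    exact ⟨b, lt_of_le_of_lt (le_max_right a δ) hb, lt_of_le_of_lt (le_max_left a δ) hb⟩
  · rintro a ⟨c, hc, hca⟩ _
    exact lt_trans hc (show c < a from hca)

lemma my_isClubIn_inter {κ : Cardinal.{0}} (hκ : ℵ₀ < κ) (hreg : κ.IsRegular)
    {C D : Set κ.ord.ToType} (hC : IsClubIn C) (hD : IsClubIn D) : IsClubIn (C ∩ D) := by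
  have h := my_isClubIn_iInter hκ hreg (fun b : Bool => cond b C D)
    (by rw [Cardinal.mk_bool]; exact lt_trans (by exact_mod_cast Cardinal.nat_lt_aleph0 2) hκ)
    (fun b => by cases b <;> assumption)
  have he : (⋂ b : Bool, cond b C D) = C ∩ D := by
    ext y; simp [Bool.forall_bool, and_comm]
  rwa [he] at h

/-- Key consequence of normality: for any club `C`, any small index set `J` and any
index `x ∉ J`, there is a point of `C` lying in all `A j`, `j ∈ J`, but not in `A x`. -/
lemma my_key {κ : Cardinal.{0}} (hκ : ℵ₀ < κ) (hreg : κ.IsRegular)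
    {A : (Order.succ κ).ord.ToType → Set κ.ord.ToType} (hA : NormalIndepFam κ A)
    (C : Set κ.ord.ToType) (hC : IsClubIn C)
    (J : Set (Order.succ κ).ord.ToType) (hJ : #J < κ)
    (x : (Order.succ κ).ord.ToType) (hx : x ∉ J) :
    ∃ ν ∈ C, (∀ j ∈ J, ν ∈ A j) ∧ ν ∉ A x := by
  have hJT : #J ≤ #κ.ord.ToType := by
    rw [Cardinal.mk_toType, Cardinal.card_ord]; exact hJ.le
  obtain ⟨e⟩ := Cardinal.le_def _ _ |>.1 hJT
  obtain ⟨δ, hδ⟩ := my_bounded_aux hreg (Set.range e)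
    (lt_of_le_of_lt Cardinal.mk_range_le hJ)
  haveI : Nontrivial (Order.succ κ).ord.ToType := by
    rw [← Cardinal.one_lt_iff_nontrivial, Cardinal.mk_toType, Cardinal.card_ord]
    exact lt_of_lt_of_le (lt_trans one_lt_aleph0 hκ) (Order.le_succ κ)
  obtain ⟨y, hy⟩ := exists_ne x
  classical
  set a : κ.ord.ToType → (Order.succ κ).ord.ToType :=
    fun i => if h : ∃ j : J, e j = i then (h.choose : (Order.succ κ).ord.ToType) else y with ha
  have hab : ∀ i j, a i ≠ (fun _ : κ.ord.ToType => x) j := by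
    intro i j
    simp only [ha]
    split
    · next h => exact fun hc => hx (hc ▸ (h.choose).2)
    · exact hy
  have hstat := hA.2 a (fun _ => x) hab
  obtain ⟨ν, hνS, hνC, hνδ⟩ := hstat (C ∩ Set.Ioi δ)
    (my_isClubIn_inter hκ hreg hC (my_isClubIn_Ioi hreg.aleph0_le δ))
  refine ⟨ν, hνC, ?_, ?_⟩
  · intro j hj
    have hlt : e ⟨j, hj⟩ < ν := lt_trans (hδ _ (Set.mem_range_self _)) hνδ
    have h1 := hνS (e ⟨j, hj⟩) hlt
    have haj : a (e ⟨j, hj⟩) = j := by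
      simp only [ha]
      rw [dif_pos ⟨⟨j, hj⟩, rfl⟩]
      exact congrArg Subtype.val
        (e.injective (Exists.choose_spec (⟨⟨j, hj⟩, rfl⟩ : ∃ j' : J, e j' = e ⟨j, hj⟩)))
    rw [haj] at h1
    exact h1.1
  · exact (hνS δ hνδ).2

/-- let `⟨A_i : i < κ⁺⟩` be a normal `κ`-independent family of subsets
of the regular uncountable cardinal `κ`, and let
`F = {X ⊆ κ : ∃ club C, ∃ I ∈ [κ⁺]^{<κ}, C ∩ ⋂_{i ∈ I} A_i ⊆ X}`.  Then `F` is a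
(proper) `κ`-complete filter extending the club filter, and for every `I ∈ [κ⁺]^κ`,
`⋂_{i ∈ I} A_i ∉ F`. -/
theorem stmt14 (κ : Cardinal.{0}) (hκ : ℵ₀ < κ) (hreg : κ.IsRegular)
    (A : (Order.succ κ).ord.ToType → Set κ.ord.ToType)
    (hA : NormalIndepFam κ A)
    (F : Set (Set κ.ord.ToType))
    (hF : F = {X | ∃ C : Set κ.ord.ToType, IsClubIn C ∧
      ∃ I : Set (Order.succ κ).ord.ToType, #I < κ ∧ (C ∩ ⋂ i ∈ I, A i) ⊆ X}) :
    IsCFilter κ F ∧ (∀ C : Set κ.ord.ToType, IsClubIn C → C ∈ F) ∧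
      ∀ I : Set (Order.succ κ).ord.ToType, #I = κ → (⋂ i ∈ I, A i) ∉ F := by
  subst hF
  -- any small index set misses some index
  have hmkι : #(Order.succ κ).ord.ToType = Order.succ κ := by
    rw [Cardinal.mk_toType, Cardinal.card_ord]
  have hout : ∀ J : Set (Order.succ κ).ord.ToType, #J < κ → ∃ x, x ∉ J := by
    intro J hJ
    by_contra h
    push_neg at h
    have huniv : J = Set.univ := Set.eq_univ_of_forall h
    rw [huniv, Cardinal.mk_univ, hmkι] at hJ
    exact absurd (lt_trans (Order.lt_succ κ) hJ) (lt_irrefl κ)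
  -- club filter inclusion
  have hclub : ∀ C : Set κ.ord.ToType, IsClubIn C →
      C ∈ {X | ∃ C : Set κ.ord.ToType, IsClubIn C ∧
        ∃ I : Set (Order.succ κ).ord.ToType, #I < κ ∧ (C ∩ ⋂ i ∈ I, A i) ⊆ X} := by
    intro C hC
    refine ⟨C, hC, ∅, ?_, fun y hy => hy.1⟩
    rw [Cardinal.mk_emptyCollection]
    exact lt_trans (by exact_mod_cast Cardinal.nat_lt_aleph0 0) hκ
  refine ⟨⟨hclub _ (my_isClubIn_univ hreg.aleph0_le), ?_, ?_, ?_⟩, hclub, ?_⟩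
  · -- properness
    rintro ⟨C, hC, J, hJ, hsub⟩
    obtain ⟨x, hx⟩ := hout J hJ
    obtain ⟨ν, hνC, hνJ, -⟩ := my_key hκ hreg hA C hC J hJ x hx
    exact hsub ⟨hνC, Set.mem_iInter₂.2 hνJ⟩
  · -- upward closure
    rintro X ⟨C, hC, J, hJ, hsub⟩ Y hXY
    exact ⟨C, hC, J, hJ, hsub.trans hXY⟩
  · -- κ-completeness
    intro ι f hι hf
    cases isEmpty_or_nonempty ι with
    | inl h =>
      rw [Set.iInter_of_empty]
      exact hclub _ (my_isClubIn_univ hreg.aleph0_le)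
    | inr h =>
      choose C hC I hI hsub using hf
      refine ⟨⋂ i, C i, my_isClubIn_iInter hκ hreg C hι hC, ⋃ i, I i, ?_, ?_⟩
      · exact (Cardinal.card_iUnion_lt_iff_forall_of_isRegular hreg hι).2 hI
      · intro y hy
        refine Set.mem_iInter.2 fun i => hsub i ⟨Set.mem_iInter.1 hy.1 i, ?_⟩
        exact Set.mem_iInter₂.2 fun j hj =>
          Set.mem_iInter₂.1 hy.2 j (Set.mem_iUnion.2 ⟨i, hj⟩)
  · -- big intersections are not in F
    rintro I hI ⟨C, hC, J, hJ, hsub⟩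
    have hdiff : (I \ J).Nonempty := by
      by_contra hd
      rw [Set.not_nonempty_iff_eq_empty, Set.diff_eq_empty] at hd
      have := lt_of_le_of_lt (Cardinal.mk_le_mk_of_subset hd) hJ
      rw [hI] at this
      exact absurd this (lt_irrefl κ)
    obtain ⟨x, hxI, hxJ⟩ := hdiff
    obtain ⟨ν, hνC, hνJ, hνx⟩ := my_key hκ hreg hA C hC J hJ x hxJ
    have : ν ∈ ⋂ i ∈ I, A i := hsub ⟨hνC, Set.mem_iInter₂.2 hνJ⟩
    exact hνx (Set.mem_iInter₂.1 this x hxI)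
end

section
/- If κ is 2^κ-supercompact, then there is a κ-complete ultrafilter U over κ extending the club filter such that Gal(U, κ, κ⁺) fails. -/
open Cardinal Set

universe u

noncomputable section
namespace Stmt16Aux
open Ordinal

set_option linter.unusedVariables false

instance (o : Ordinal.{0}) : IsWellOrder o.ToType (· < ·) := isWellOrder_lt

lemma mk_toType' (c : Cardinal.{0}) : #c.ord.ToType = c := by
  rw [Cardinal.mk_toType, Cardinal.card_ord]

variable {κ : Cardinal.{0}}

lemma exists_ub (hreg : κ.IsRegular) {B : Set κ.ord.ToType} (hB : #B < κ) :
    ∃ b, ∀ x ∈ B, x < b := by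
  by_contra h
  push_neg at h
  have hunb : Set.Unbounded (· < ·) B := by
    intro a
    obtain ⟨x, hx, hax⟩ := h a
    exact ⟨x, hx, not_lt.mpr hax⟩
  have := Order.cof_le (s := B) (fun a => let ⟨b, hb, h⟩ := hunb a; ⟨b, hb, not_lt.mp h⟩)
  rw [Ordinal.cof_toType] at this
  rw [hreg.cof_eq] at this
  exact absurd (lt_of_lt_of_le hB this) (lt_irrefl _)

lemma exists_lub {B : Set κ.ord.ToType} (hne : B.Nonempty) {b} (hb : ∀ x ∈ B, x ≤ b) :
    ∃ l, IsLUB B l := by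
  have hwf : (upperBounds B).Nonempty := ⟨b, fun x hx => hb x hx⟩
  classical
  obtain ⟨l, hl, hmin⟩ := (IsWellFounded.wf (r := ((· < ·) : κ.ord.ToType → κ.ord.ToType → Prop))).has_min _ hwf
  refine ⟨l, hl, fun c hc => ?_⟩
  by_contra hcl
  exact hmin c hc (not_le.mp hcl)

lemma card_code_lt {L A : Type} {s : Set L} (hs : #s < κ) (u : A → L)
    (hu : Function.Injective u) : #{a | u a ∈ s} < κ := by
  refine lt_of_le_of_lt ?_ hs
  refine Cardinal.mk_le_of_injective (f := fun a : {a | u a ∈ s} => (⟨u a.1, a.2⟩ : ↥s)) ?_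
  intro a b hab
  simp only [Subtype.mk_eq_mk] at hab
  exact Subtype.ext (hu hab)

lemma card_Iio_lt (x : κ.ord.ToType) : #(Set.Iio x) < κ := by
  have h1 : #{y // y < x} = (Ordinal.typein ((· < ·) : κ.ord.ToType → κ.ord.ToType → Prop) x).card :=
    Ordinal.card_typein x
  have h2 : Ordinal.typein ((· < ·) : κ.ord.ToType → κ.ord.ToType → Prop) x < κ.ord := by
    have := Ordinal.typein_lt_type ((· < ·) : κ.ord.ToType → κ.ord.ToType → Prop) x
    rwa [Ordinal.type_toType] at this
  have h3 := Cardinal.lt_ord.mp h2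
  exact h1 ▸ h3

lemma card_Iic_lt (hκ : ℵ₀ < κ) (x : κ.ord.ToType) : #(Set.Iic x) < κ := by
  have : (Set.Iic x) = Set.Iio x ∪ {x} := by
    ext y; simp [le_iff_lt_or_eq]
  rw [this]
  refine lt_of_le_of_lt (Cardinal.mk_union_le _ _) ?_
  exact Cardinal.add_lt_of_lt hκ.le (card_Iio_lt x) (by simpa using (lt_of_le_of_lt (by simp) hκ))

/-- bounded subsets -/
lemma kappa_regular (hκ : ℵ₀ < κ) {lam : Cardinal.{0}} (hlam : κ ≤ lam)
    (UU : Ultrafilter {s : Set lam.ord.ToType // #s < κ})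
    (hcc : CComplete κ UU) (hfine : ∀ x, {s : {s : Set lam.ord.ToType // #s < κ} | x ∈ s.1} ∈ UU) :
    κ.IsRegular := by
  refine ⟨hκ.le, ?_⟩
  by_contra hcof
  push_neg at hcof
  obtain ⟨S, hSunb, hScard⟩ := Order.exists_cof_eq (α := κ.ord.ToType)
  rw [Ordinal.cof_toType] at hScard
  have hScard' : #S < κ := by rw [hScard]; exact hcof
  have hle : #κ.ord.ToType ≤ #lam.ord.ToType := by rw [mk_toType', mk_toType']; exact hlam
  obtain ⟨e⟩ := (Cardinal.le_def _ _).mp hle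
  have hf : ∀ b : ↥S, (⋂ (x : ↥(Set.Iic b.val)), {s : {s : Set lam.ord.ToType // #s < κ} | e x.val ∈ s.val}) ∈ UU := by
    intro b
    exact hcc _ _ (card_Iic_lt hκ b.val) (fun x => hfine _)
  have hZ : (⋂ (b : ↥S), ⋂ (x : ↥(Set.Iic b.val)), {s : {s : Set lam.ord.ToType // #s < κ} | e x.val ∈ s.val}) ∈ UU :=
    hcc _ _ hScard' hf
  obtain ⟨s₀, hs₀⟩ := Ultrafilter.nonempty_of_mem hZ
  have hsub : Set.range e ⊆ s₀.val := by
    rintro _ ⟨x, rfl⟩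
    obtain ⟨b, hbS, hxb⟩ := hSunb x
    have hxb' : x ≤ b := hxb
    have := Set.mem_iInter.mp hs₀ ⟨b, hbS⟩
    exact Set.mem_iInter.mp this ⟨x, hxb'⟩
  have : κ ≤ #s₀.val := by
    have h1 : #(Set.range e) = #κ.ord.ToType := Cardinal.mk_range_eq e e.injective
    have h2 := Cardinal.mk_le_mk_of_subset hsub
    rw [h1, mk_toType'] at h2
    exact h2
  exact absurd (lt_of_le_of_lt this s₀.2) (lt_irrefl _)

lemma kappa_strong_limit (hκ : ℵ₀ < κ) (hreg : κ.IsRegular) {lam : Cardinal.{0}} (hlam : κ ≤ lam)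
    (UU : Ultrafilter {s : Set lam.ord.ToType // #s < κ})
    (hcc : CComplete κ UU) (hfine : ∀ x, {s : {s : Set lam.ord.ToType // #s < κ} | x ∈ s.1} ∈ UU) :
    ∀ c < κ, (2 : Cardinal.{0}) ^ c < κ := by
  intro c hc
  by_contra h2
  push_neg at h2
  classical
  -- embeddings
  have hle : #κ.ord.ToType ≤ #(c.ord.ToType → Bool) := by
    rw [mk_toType']
    have : #(c.ord.ToType → Bool) = (2 : Cardinal.{0}) ^ c := by
      rw [Cardinal.mk_arrow, mk_toType']
      simp
    rw [this]; exact h2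
  obtain ⟨G⟩ := (Cardinal.le_def _ _).mp hle
  have hle2 : #κ.ord.ToType ≤ #lam.ord.ToType := by rw [mk_toType', mk_toType']; exact hlam
  obtain ⟨e⟩ := (Cardinal.le_def _ _).mp hle2
  -- the projection
  have hpre : ∀ s : {s : Set lam.ord.ToType // #s < κ}, #{x : κ.ord.ToType | e x ∈ s.val} < κ := by
    intro s
    have : #{x : κ.ord.ToType | e x ∈ s.val} ≤ #s.val := by
      refine Cardinal.mk_le_of_injective (f := fun x => (⟨e x.val, x.2⟩ : ↥s.val)) ?_
      intro a b hab
      simp only [Subtype.mk_eq_mk] at hab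
      exact Subtype.ext (e.injective hab)
    exact lt_of_le_of_lt this s.2
  let π : {s : Set lam.ord.ToType // #s < κ} → κ.ord.ToType :=
    fun s => Classical.choose (exists_ub hreg (hpre s))
  have hπ : ∀ s x, e x ∈ s.val → x < π s := by
    intro s x hx
    exact Classical.choose_spec (exists_ub hreg (hpre s)) x hx
  let t : c.ord.ToType → Bool := fun β => if {s | G (π s) β = true} ∈ UU then true else false
  have hZβ : ∀ β, {s | G (π s) β = t β} ∈ UU := by
    intro β
    by_cases hβ : {s | G (π s) β = true} ∈ UU
    · simpa [t, hβ] using hβ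
    · have := (Ultrafilter.compl_mem_iff_notMem).mpr hβ
      have heq : {s | G (π s) β = true}ᶜ = {s | G (π s) β = false} := by
        ext s; simp
      rw [heq] at this
      simpa [t, hβ] using this
  have hZ : (⋂ β, {s | G (π s) β = t β}) ∈ UU := by
    refine hcc _ _ ?_ hZβ
    rw [mk_toType']; exact hc
  obtain ⟨s₁, hs₁⟩ := Ultrafilter.nonempty_of_mem hZ
  have hZ' : ((⋂ β, {s | G (π s) β = t β}) ∩ {s | e (π s₁) ∈ s.val}) ∈ UU :=
    Filter.inter_mem hZ (hfine _)
  obtain ⟨s₂, hs₂Z, hs₂m⟩ := Ultrafilter.nonempty_of_mem hZ'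
  have hGs₁ : G (π s₁) = t := funext fun β => Set.mem_iInter.mp hs₁ β
  have hGs₂ : G (π s₂) = t := funext fun β => Set.mem_iInter.mp hs₂Z β
  have hlt : π s₁ < π s₂ := hπ s₂ (π s₁) hs₂m
  have : π s₁ = π s₂ := G.injective (hGs₁.trans hGs₂.symm)
  exact absurd this (ne_of_lt hlt)
lemma club_univ (hκ : ℵ₀ < κ) : IsClubIn (Set.univ : Set κ.ord.ToType) := by
  haveI := Cardinal.noMaxOrder (le_of_lt hκ)
  exact ⟨fun a => by obtain ⟨b, hb⟩ := exists_gt a; exact ⟨b, trivial, hb⟩, fun _ _ _ => trivial⟩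

lemma club_sInter (hκ : ℵ₀ < κ) (hreg : κ.IsRegular) (𝒞 : Set (Set κ.ord.ToType))
    (h𝒞 : #𝒞 < κ) (hc : ∀ C ∈ 𝒞, IsClubIn C) : IsClubIn (⋂₀ 𝒞) := by
  classical
  constructor
  · -- unbounded
    intro a
    have hnxt : ∀ (p : ↥𝒞) (x : κ.ord.ToType), ∃ b ∈ p.val, x < b := fun p x => (hc p.1 p.2).1 x
    let nxt : ↥𝒞 → κ.ord.ToType → κ.ord.ToType := fun p x => (hnxt p x).choose
    have hnxt1 : ∀ p x, nxt p x ∈ p.val := fun p x => (hnxt p x).choose_spec.1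
    have hnxt2 : ∀ p x, x < nxt p x := fun p x => (hnxt p x).choose_spec.2
    have hBcard : ∀ x : κ.ord.ToType, #(insert x (Set.range (fun p : ↥𝒞 => nxt p x)) : Set κ.ord.ToType) < κ := by
      intro x
      refine lt_of_le_of_lt (Cardinal.mk_insert_le) ?_
      refine Cardinal.add_lt_of_lt hκ.le ?_ (lt_of_le_of_lt (by simp) hκ)
      exact lt_of_le_of_lt Cardinal.mk_range_le h𝒞
    let step : κ.ord.ToType → κ.ord.ToType := fun x => (exists_ub hreg (hBcard x)).choose
    have hstep : ∀ x y, y ∈ insert x (Set.range (fun p : ↥𝒞 => nxt p x)) → y < step x :=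
      fun x => (exists_ub hreg (hBcard x)).choose_spec
    have hstep1 : ∀ x, x < step x := fun x => hstep x x (Set.mem_insert _ _)
    have hstep2 : ∀ p x, nxt p x < step x := fun p x => hstep x _ (Set.mem_insert_of_mem _ ⟨p, rfl⟩)
    let seq : ℕ → κ.ord.ToType := fun n => Nat.rec a (fun _ x => step x) n
    have hseqsucc : ∀ n, seq (n+1) = step (seq n) := fun n => rfl
    have hseqmono : ∀ n, seq n < seq (n+1) := fun n => hstep1 (seq n)
    have hrange : #(Set.range seq) < κ :=
      lt_of_le_of_lt Cardinal.mk_range_le (lt_of_le_of_lt (by simp) hκ)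
    obtain ⟨b, hb⟩ := exists_ub hreg hrange
    obtain ⟨l, hl⟩ := exists_lub (B := Set.range seq) ⟨a, ⟨0, rfl⟩⟩ (fun x hx => (hb x hx).le)
    have hseql : ∀ n, seq n < l := by
      intro n
      exact lt_of_lt_of_le (hseqmono n) (hl.1 ⟨n+1, rfl⟩)
    have hlC : ∀ C ∈ 𝒞, l ∈ C := by
      intro C hC
      have hnxtl : ∀ n, nxt ⟨C, hC⟩ (seq n) ∈ C ∩ Set.Iio l := by
        intro n
        refine ⟨hnxt1 ⟨C, hC⟩ (seq n), ?_⟩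
        exact lt_of_lt_of_le (hstep2 ⟨C, hC⟩ (seq n)) ((hseqsucc n) ▸ (hseql (n+1)).le)
      refine (hc C hC).2 l ⟨_, hnxtl 0⟩ ⟨fun x hx => hx.2.le, ?_⟩
      intro m hm
      refine hl.2 ?_
      rintro _ ⟨n, rfl⟩
      exact (le_of_lt (lt_of_lt_of_le (hnxt2 ⟨C, hC⟩ (seq n)) (hm (hnxtl n))))
    exact ⟨l, fun C hC => hlC C hC, lt_of_lt_of_le (hseqmono 0) (hl.1 ⟨1, rfl⟩)⟩
  · -- closed
    intro a hne hlub
    intro C hC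
    obtain ⟨x, hx1, hx2⟩ := hne
    refine (hc C hC).2 a ⟨x, hx1 C hC, hx2⟩ ⟨fun y hy => hy.2.le, ?_⟩
    intro m hm
    refine hlub.2 ?_
    intro y hy
    exact hm ⟨hy.1 C hC, hy.2⟩
/-- the ordinal rank of an element of `κ.ord.ToType` -/
def tyx {κ : Cardinal.{0}} (x : κ.ord.ToType) : Ordinal.{0} :=
  Ordinal.typein ((· < ·) : κ.ord.ToType → κ.ord.ToType → Prop) x

lemma tyx_lt_ord (x : κ.ord.ToType) : tyx x < κ.ord := by
  have := Ordinal.typein_lt_type ((· < ·) : κ.ord.ToType → κ.ord.ToType → Prop) x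
  rwa [Ordinal.type_toType] at this

lemma tyx_lt_tyx {x y : κ.ord.ToType} : x < y ↔ tyx x < tyx y :=
  (Ordinal.typein_lt_typein _).symm

lemma tyx_inj {x y : κ.ord.ToType} (h : tyx x = tyx y) : x = y :=
  Ordinal.typein_injective _ h

/-- representatives of regular cardinals -/
def RegT (κ : Cardinal.{0}) : Set κ.ord.ToType :=
  {x | (tyx x).card.IsRegular ∧ (tyx x).card.ord = tyx x}

/-- the stationary piece attached to `x` -/
def piece {κ : Cardinal.{0}} (x : κ.ord.ToType) : Set κ.ord.ToType :=
  {z | (tyx z).cof = (tyx x).card}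

lemma piece_disjoint {x y : κ.ord.ToType} (hx : x ∈ RegT κ) (hy : y ∈ RegT κ)
    (hxy : x ≠ y) (z : κ.ord.ToType) : z ∈ piece x → z ∉ piece y := by
  intro hzx hzy
  have hcc : (tyx x).card = (tyx y).card := hzx.symm.trans hzy
  exact hxy (tyx_inj (by rw [← hx.2, ← hy.2, hcc]))

lemma regT_large (hκ : ℵ₀ < κ) (hreg : κ.IsRegular) (hsl : ∀ c < κ, (2 : Cardinal.{0}) ^ c < κ) :
    κ ≤ #(RegT κ) := by
  by_contra hlt
  push_neg at hlt
  obtain ⟨b, hb⟩ := exists_ub hreg hlt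
  -- find a regular cardinal whose ordinal exceeds tyx b
  set ν : Cardinal.{0} := (tyx b).card with hν
  have h1 : ℵ₀ ⊔ ν < κ := by
    refine sup_lt_iff.mpr ⟨hκ, ?_⟩
    exact Cardinal.lt_ord.mp (tyx_lt_ord b)
  have h2 : Order.succ (ℵ₀ ⊔ ν) < κ :=
    lt_of_le_of_lt (Order.succ_le_of_lt (Cardinal.cantor (ℵ₀ ⊔ ν))) (hsl _ h1)
  set μ : Cardinal.{0} := Order.succ (ℵ₀ ⊔ ν) with hμ
  have hμreg : μ.IsRegular := Cardinal.isRegular_succ le_sup_left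
  have hμord : μ.ord < κ.ord := Cardinal.ord_lt_ord.mpr h2
  set x : κ.ord.ToType := Ordinal.enum ((· < ·) : κ.ord.ToType → κ.ord.ToType → Prop)
    ⟨μ.ord, by rw [Ordinal.type_toType]; exact hμord⟩ with hx
  have htyx : tyx x = μ.ord := Ordinal.typein_enum _ _
  have hxreg : x ∈ RegT κ := by
    constructor
    · rw [htyx, Cardinal.card_ord]; exact hμreg
    · rw [htyx, Cardinal.card_ord]
  have hxb : x < b := hb x hxreg
  have : tyx x < tyx b := tyx_lt_tyx.mp hxb
  rw [htyx] at this
  have hcard : μ ≤ ν := by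
    have h := Ordinal.card_le_card this.le
    rwa [Cardinal.card_ord] at h
  have : ν < μ := lt_of_le_of_lt le_sup_right (Order.lt_succ _)
  exact absurd hcard (not_le.mpr this)


lemma piece_stationary (hκ : ℵ₀ < κ) (hreg : κ.IsRegular) {x : κ.ord.ToType}
    (hx : x ∈ RegT κ) {C : Set κ.ord.ToType} (hC : IsClubIn C) :
    ∃ z, z ∈ C ∧ z ∈ piece x := by
  classical
  set μ : Cardinal.{0} := (tyx x).card with hμdef
  have hμreg : μ.IsRegular := hx.1
  have hμκ : μ < κ := Cardinal.lt_ord.mp (hx.2 ▸ tyx_lt_ord x)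
  haveI : Nonempty κ.ord.ToType := by
    rw [Ordinal.toType_nonempty_iff_ne_zero]
    intro h0
    have := Cardinal.isSuccLimit_ord hκ.le
    exact this.ne_bot h0
  haveI : NoMaxOrder μ.ord.ToType :=
    Ordinal.toType_noMax_of_succ_lt (fun a ha => (Cardinal.isSuccLimit_ord hμreg.aleph0_le).succ_lt ha)
  haveI hne : Nonempty μ.ord.ToType := by
    rw [Ordinal.toType_nonempty_iff_ne_zero]
    exact fun h => (Cardinal.isSuccLimit_ord hμreg.aleph0_le).ne_bot h
  have hwf : WellFounded ((· < ·) : μ.ord.ToType → μ.ord.ToType → Prop) := IsWellFounded.wf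
  -- helper: strict upper bounds
  let ubOf : Set κ.ord.ToType → κ.ord.ToType := fun B =>
    if h : #B < κ then (exists_ub hreg h).choose else Classical.arbitrary _
  have hubOf : ∀ B : Set κ.ord.ToType, #B < κ → ∀ y ∈ B, y < ubOf B := by
    intro B h y hy
    simp only [ubOf, dif_pos h]
    exact (exists_ub hreg h).choose_spec y hy
  -- helper: next element of C
  let nxtC : κ.ord.ToType → κ.ord.ToType := fun b => (hC.1 b).choose
  have hnxtC1 : ∀ b, nxtC b ∈ C := fun b => (hC.1 b).choose_spec.1
  have hnxtC2 : ∀ b, b < nxtC b := fun b => (hC.1 b).choose_spec.2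
  have hIio : ∀ ξ : μ.ord.ToType, #{η : μ.ord.ToType // η < ξ} < κ :=
    fun ξ => lt_trans (card_Iio_lt (κ := μ) ξ) hμκ
  let body : ∀ ξ : μ.ord.ToType, (∀ η, η < ξ → κ.ord.ToType) → κ.ord.ToType := fun ξ IH =>
    nxtC (ubOf (Set.range (fun p : {η // η < ξ} => IH p.1 p.2)))
  let g : μ.ord.ToType → κ.ord.ToType := hwf.fix body
  have hgeq : ∀ ξ, g ξ = body ξ (fun η _ => g η) := fun ξ => hwf.fix_eq body ξ
  have hgC : ∀ ξ, g ξ ∈ C := by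
    intro ξ; rw [hgeq ξ]; exact hnxtC1 _
  have hrcard : ∀ ξ : μ.ord.ToType, #(Set.range (fun p : {η // η < ξ} => g p.1)) < κ :=
    fun ξ => lt_of_le_of_lt Cardinal.mk_range_le (hIio ξ)
  have hgmono : ∀ {η ξ : μ.ord.ToType}, η < ξ → g η < g ξ := by
    intro η ξ hηξ
    have h1 : g η ∈ Set.range (fun p : {η' // η' < ξ} => g p.1) := ⟨⟨η, hηξ⟩, rfl⟩
    have h2 : g η < ubOf (Set.range (fun p : {η' // η' < ξ} => g p.1)) :=
      hubOf _ (hrcard ξ) _ h1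
    have h3 := hnxtC2 (ubOf (Set.range (fun p : {η' // η' < ξ} => g p.1)))
    have h4 : g ξ = nxtC (ubOf (Set.range (fun p : {η' // η' < ξ} => g p.1))) := hgeq ξ
    rw [h4]; exact lt_trans h2 h3
  -- the limit point
  have hrange2 : #(Set.range g) < κ := by
    refine lt_of_le_of_lt Cardinal.mk_range_le ?_
    rw [mk_toType']; exact hμκ
  obtain ⟨b, hb⟩ := exists_ub hreg hrange2
  obtain ⟨l, hl⟩ := exists_lub (B := Set.range g) ⟨g (Classical.arbitrary _), ⟨_, rfl⟩⟩
    (fun y hy => (hb y hy).le)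
  have hgl : ∀ ξ, g ξ < l := by
    intro ξ
    obtain ⟨ξ', hξ'⟩ := exists_gt ξ
    exact lt_of_lt_of_le (hgmono hξ') (hl.1 ⟨ξ', rfl⟩)
  have hlC : l ∈ C := by
    refine hC.2 l ⟨g (Classical.arbitrary _), hgC _, hgl _⟩ ⟨fun y hy => hy.2.le, ?_⟩
    intro m hm
    refine hl.2 ?_
    rintro _ ⟨ξ, rfl⟩
    exact hm ⟨hgC ξ, hgl ξ⟩
  -- compute the cofinality of l
  refine ⟨l, hlC, ?_⟩
  let f : μ.ord.ToType → Ordinal.{0} := fun ξ => tyx (g ξ)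
  have hfmono : ∀ {η ξ}, η < ξ → f η < f ξ := fun h => tyx_lt_tyx.mp (hgmono h)
  have hfl : ∀ ξ, f ξ < tyx l := fun ξ => tyx_lt_tyx.mp (hgl ξ)
  have hsup : (⨆ ξ, f ξ) = tyx l := by
    refine le_antisymm (ciSup_le fun ξ => (hfl ξ).le) ?_
    by_contra hlt
    push_neg at hlt
    have hlt' : (⨆ ξ, f ξ) < Ordinal.type ((· < ·) : κ.ord.ToType → κ.ord.ToType → Prop) := by
      rw [Ordinal.type_toType]
      exact lt_trans hlt (tyx_lt_ord l)
    obtain ⟨y, hy⟩ := Ordinal.typein_surj _ hlt'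
    have hyub : y ∈ upperBounds (Set.range g) := by
      rintro _ ⟨ξ, rfl⟩
      by_contra hyg
      push_neg at hyg
      have h1 : tyx y < tyx (g ξ) := tyx_lt_tyx.mp hyg
      have h2 : f ξ ≤ ⨆ ξ, f ξ := le_ciSup (Ordinal.bddAbove_range f) ξ
      have h3 : f ξ ≤ tyx y := by rw [show tyx y = (⨆ ξ, f ξ) from hy]; exact h2
      exact absurd h1 (not_lt.mpr h3)
    have h4 := hl.2 hyub
    have h2 : tyx l ≤ tyx y := by
      rcases lt_or_eq_of_le h4 with h | h
      · exact (tyx_lt_tyx.mp h).le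
      · exact h ▸ le_refl _
    have h5 : tyx l ≤ ⨆ ξ, f ξ := by rw [← show tyx y = (⨆ ξ, f ξ) from hy]; exact h2
    exact absurd (lt_of_le_of_lt h5 hlt) (lt_irrefl _)
  have hcof_le : (tyx l).cof ≤ μ := by
    have H : ∀ ξ, f ξ < ⨆ ξ, f ξ := by rw [hsup]; exact hfl
    have := Ordinal.cof_iSup_le_lift H
    rw [hsup] at this
    simpa [mk_toType'] using this
  have hcof_ge : μ ≤ (tyx l).cof := by
    obtain ⟨ι₀, f₀, hlsub, hcard⟩ := Ordinal.exists_lsub_cof (tyx l)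
    have hψ : ∀ i : ι₀, ∃ ξ, f₀ i < f ξ := by
      intro i
      have h1 : f₀ i < tyx l := hlsub ▸ Ordinal.lt_lsub f₀ i
      rw [← hsup] at h1
      exact (lt_ciSup_iff (Ordinal.bddAbove_range f)).mp h1
    let ψ : ι₀ → μ.ord.ToType := fun i => (hψ i).choose
    have hψs : ∀ i, f₀ i < f (ψ i) := fun i => (hψ i).choose_spec
    have hunb : Set.Unbounded (· < ·) (Set.range ψ) := by
      intro ξ₀
      by_contra hcon
      push_neg at hcon
      have : ∀ i, ψ i < ξ₀ := by
        intro i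
        have := hcon (ψ i) ⟨i, rfl⟩
        exact this
      have hall : ∀ i, f₀ i < f ξ₀ := fun i => lt_trans (hψs i) (hfmono (this i))
      have := Ordinal.lsub_le hall
      rw [hlsub] at this
      exact absurd (hfl ξ₀) (not_lt.mpr this)
    have h5 := Order.cof_le (s := Set.range ψ) (fun a => let ⟨b, hb, h⟩ := hunb a; ⟨b, hb, not_lt.mp h⟩)
    rw [Ordinal.cof_toType] at h5
    have h6 : μ.ord.cof = μ := hμreg.cof_eq
    calc μ = μ.ord.cof := h6.symm
    _ ≤ #(Set.range ψ) := h5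
    _ ≤ #ι₀ := Cardinal.mk_range_le
    _ = (tyx l).cof := hcard
  show (tyx l).cof = μ
  exact le_antisymm hcof_le hcof_ge

/-- The Hausdorff-style index type. -/
abbrev Yt (κ : Cardinal.{0}) : Type :=
  Σ β : κ.ord.ToType, ((↥(Set.Iio β) → Bool) → Bool)

/-- The independent family on `Yt κ` indexed by branches. -/
def Xf {κ : Cardinal.{0}} (f : κ.ord.ToType → Bool) : Set (Yt κ) :=
  {y | y.2 (fun η => f η.1) = true}

lemma mk_Yt_le (hκ : ℵ₀ < κ) (hsl : ∀ c < κ, (2 : Cardinal.{0}) ^ c < κ) : #(Yt κ) ≤ κ := by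
  have h1 : ∀ β : κ.ord.ToType, #((↥(Set.Iio β) → Bool) → Bool) ≤ κ := by
    intro β
    have hb : #(↥(Set.Iio β) → Bool) = 2 ^ #(Set.Iio β) := by
      rw [Cardinal.mk_arrow]; simp
    have h2 : (2 : Cardinal.{0}) ^ #(Set.Iio β) < κ := hsl _ (card_Iio_lt β)
    have h3 : #((↥(Set.Iio β) → Bool) → Bool) = 2 ^ #(↥(Set.Iio β) → Bool) := by
      rw [Cardinal.mk_arrow]; simp
    rw [h3, hb]
    exact (hsl _ h2).le
  calc #(Yt κ) = Cardinal.sum fun β : κ.ord.ToType => #((↥(Set.Iio β) → Bool) → Bool) :=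
        Cardinal.mk_sigma _
    _ ≤ Cardinal.sum fun _ : κ.ord.ToType => κ := Cardinal.sum_le_sum _ _ h1
    _ = #κ.ord.ToType * κ := Cardinal.sum_const' _ _
    _ = κ := by rw [mk_toType']; exact Cardinal.mul_eq_self hκ.le

/-- key independence property -/
lemma Xf_combo (hκ : ℵ₀ < κ) (hreg : κ.IsRegular) (P Q : Set (κ.ord.ToType → Bool))
    (hP : #P < κ) (hQ : #Q < κ) (hPQ : Disjoint P Q) :
    ∃ y : Yt κ, (∀ f ∈ P, y ∈ Xf f) ∧ ∀ g ∈ Q, y ∉ Xf g := by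
  classical
  haveI : Nonempty κ.ord.ToType := by
    rw [Ordinal.toType_nonempty_iff_ne_zero]
    exact fun h0 => (Cardinal.isSuccLimit_ord hκ.le).ne_bot h0
  -- separation points
  have hd : ∀ p : ↥(P ∪ Q) × ↥(P ∪ Q), p.1.val ≠ p.2.val → ∃ d, p.1.val d ≠ p.2.val d := by
    intro p hp
    by_contra hcon
    push_neg at hcon
    exact hp (funext hcon)
  let dpt : ↥(P ∪ Q) × ↥(P ∪ Q) → κ.ord.ToType := fun p =>
    if h : p.1.val ≠ p.2.val then (hd p h).choose else Classical.arbitrary _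
  have hPQcard : #(↥(P ∪ Q) × ↥(P ∪ Q)) < κ := by
    have h1 : #(↥(P ∪ Q)) < κ :=
      lt_of_le_of_lt (Cardinal.mk_union_le _ _) (Cardinal.add_lt_of_lt hκ.le hP hQ)
    have := Cardinal.mul_lt_of_lt hκ.le h1 h1
    simpa [Cardinal.mk_prod] using this
  have hrange : #(Set.range dpt) < κ := lt_of_le_of_lt Cardinal.mk_range_le hPQcard
  obtain ⟨β, hβ⟩ := exists_ub hreg hrange
  -- restrictions to Iio β are injective on P ∪ Q
  have hrst : ∀ f g : ↥(P ∪ Q), f.val ≠ g.val →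
      (fun η : ↥(Set.Iio β) => f.val η.1) ≠ (fun η : ↥(Set.Iio β) => g.val η.1) := by
    intro f g hfg hcon
    have hdd := (hd (f, g) hfg).choose_spec
    have hdval : dpt (f, g) = (hd (f, g) hfg).choose := dif_pos hfg
    have hdβ : dpt (f, g) < β := hβ _ ⟨(f, g), rfl⟩
    rw [hdval] at hdβ
    have := congrFun hcon ⟨(hd (f, g) hfg).choose, hdβ⟩
    exact hdd this
  let F : (↥(Set.Iio β) → Bool) → Bool := fun w =>
    if ∃ f ∈ P, (fun η : ↥(Set.Iio β) => f η.1) = w then true else false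
  refine ⟨(⟨β, F⟩ : Yt κ), ?_, ?_⟩
  · intro f hf
    show F (fun η => f η.1) = true
    exact if_pos ⟨f, hf, rfl⟩
  · intro g hg hmem
    have h2 : F (fun η : ↥(Set.Iio β) => g η.1) = true := hmem
    by_cases h : ∃ f ∈ P, (fun η : ↥(Set.Iio β) => f η.1) = (fun η : ↥(Set.Iio β) => g η.1)
    · obtain ⟨f, hfP, hfg⟩ := h
      have hne : f ≠ g := fun h => (Set.disjoint_left.mp hPQ (h ▸ hfP)) hg
      exact hrst ⟨f, Or.inl hfP⟩ ⟨g, Or.inr hg⟩ hne hfg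
    · have h3 : F (fun η : ↥(Set.Iio β) => g η.1) = false := if_neg h
      rw [h2] at h3
      exact absurd h3 (by decide)
/-- The stationary-independent family indexed by branches. -/
def Sf {κ : Cardinal.{0}} (E : Yt κ → ↥(RegT κ)) (f : κ.ord.ToType → Bool) :
    Set κ.ord.ToType :=
  {z | ∃ y, y ∈ Xf f ∧ z ∈ piece (E y).val}

lemma Sf_combo (hκ : ℵ₀ < κ) (hreg : κ.IsRegular) {E : Yt κ → ↥(RegT κ)}
    (hE : Function.Injective E) (P Q : Set (κ.ord.ToType → Bool))
    (hP : #P < κ) (hQ : #Q < κ) (hPQ : Disjoint P Q)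
    (𝒞 : Set (Set κ.ord.ToType)) (h𝒞 : #𝒞 < κ) (hclub : ∀ C ∈ 𝒞, IsClubIn C) :
    ∃ z, (∀ f ∈ P, z ∈ Sf E f) ∧ (∀ g ∈ Q, z ∉ Sf E g) ∧ z ∈ ⋂₀ 𝒞 := by
  obtain ⟨y₀, hy₀P, hy₀Q⟩ := Xf_combo hκ hreg P Q hP hQ hPQ
  obtain ⟨z, hzC, hzp⟩ := piece_stationary hκ hreg (E y₀).2 (club_sInter hκ hreg 𝒞 h𝒞 hclub)
  refine ⟨z, ?_, ?_, hzC⟩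
  · intro f hf
    exact ⟨y₀, hy₀P f hf, hzp⟩
  · rintro g hg ⟨y, hyX, hzy⟩
    by_cases hyy : y = y₀
    · exact hy₀Q g hg (hyy ▸ hyX)
    · exact piece_disjoint (E y).2 (E y₀).2 (fun h => hyy (hE (Subtype.ext h))) z hzy hzp
lemma range_equiv_val {α : Type} {s : Set α} {β : Type} (e : β ≃ ↥s) :
    Set.range (fun t => (e t).val) = s := by
  ext x
  constructor
  · rintro ⟨t, rfl⟩; exact (e t).2
  · intro hx; exact ⟨e.symm ⟨x, hx⟩, by simp⟩

lemma exists_enc (hκ : ℵ₀ < κ) :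
    ∃ ENC : {I : Set (Order.succ κ).ord.ToType // #I = κ} →
      (κ.ord.ToType → (Order.succ κ).ord.ToType),
      Function.Injective ENC ∧ ∀ I, Set.range (ENC I) = I.val := by
  classical
  have hT : ∀ I : {I : Set (Order.succ κ).ord.ToType // #I = κ},
      Nonempty (κ.ord.ToType ≃ ↥I.val) := by
    intro I
    apply Cardinal.eq.mp
    rw [mk_toType']
    exact I.2.symm
  refine ⟨fun I => fun t => ((hT I).some t).val, ?_, fun I => range_equiv_val _⟩
  intro I J h
  apply Subtype.ext
  rw [← range_equiv_val (hT I).some, ← range_equiv_val (hT J).some]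
  exact congrArg Set.range h

lemma exists_code (hκ : ℵ₀ < κ) :
    Nonempty ((((Order.succ κ).ord.ToType ⊕ Set κ.ord.ToType) ⊕
        (κ.ord.ToType → (Order.succ κ).ord.ToType)) ↪ ((2 : Cardinal.{0}) ^ κ).ord.ToType) := by
  apply (Cardinal.le_def _ _).mp
  rw [mk_toType']
  have h2κ : ℵ₀ ≤ (2 : Cardinal.{0}) ^ κ := le_trans hκ.le (Cardinal.cantor κ).le
  have hsucc : Order.succ κ ≤ (2 : Cardinal.{0}) ^ κ := Order.succ_le_of_lt (Cardinal.cantor κ)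
  have h1 : #((Order.succ κ).ord.ToType ⊕ Set κ.ord.ToType) ≤ (2 : Cardinal.{0}) ^ κ := by
    rw [Cardinal.mk_sum]
    simp only [Cardinal.lift_id]
    rw [mk_toType', Cardinal.mk_set, mk_toType']
    calc Order.succ κ + 2 ^ κ ≤ 2 ^ κ + 2 ^ κ := by
          exact add_le_add hsucc (le_refl _)
    _ = 2 ^ κ := Cardinal.add_eq_self h2κ
  have h2 : #(κ.ord.ToType → (Order.succ κ).ord.ToType) ≤ (2 : Cardinal.{0}) ^ κ := by
    rw [Cardinal.mk_arrow]
    simp only [Cardinal.lift_id]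
    rw [mk_toType', mk_toType']
    calc (Order.succ κ) ^ κ ≤ (2 ^ κ) ^ κ := Cardinal.power_le_power_right hsucc
    _ = 2 ^ (κ * κ) := Cardinal.power_mul.symm
    _ = 2 ^ κ := by rw [Cardinal.mul_eq_self hκ.le]
  rw [Cardinal.mk_sum]
  simp only [Cardinal.lift_id]
  calc _ ≤ (2:Cardinal.{0}) ^ κ + (2:Cardinal.{0}) ^ κ := add_le_add h1 h2
  _ = (2:Cardinal.{0}) ^ κ := Cardinal.add_eq_self h2κ

end Stmt16Aux
end

/-- if `κ` is `2^κ`-supercompact, then there is a `κ`-complete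
ultrafilter `W` over `κ` extending the club filter (every club belongs to `W`)
which fails the Galvin property `Gal(W, κ, κ⁺)`. -/
theorem stmt16 (κ : Cardinal.{0}) (hκ : ℵ₀ < κ)
    (hsc : IsSupercompact κ ((2 : Cardinal.{0}) ^ κ)) :
    ∃ W : Ultrafilter κ.ord.ToType, CComplete κ W ∧
      (∀ C : Set κ.ord.ToType, IsClubIn C → C ∈ W) ∧
      ¬ Gal W κ (Order.succ κ) := by
  classical
  open Stmt16Aux in
  obtain ⟨UU, hcc, hfine, hnorm⟩ := hsc
  have hκ2 : κ ≤ (2 : Cardinal.{0}) ^ κ := (Cardinal.cantor κ).le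
  have hreg : κ.IsRegular := Stmt16Aux.kappa_regular hκ hκ2 UU hcc hfine
  have hsl : ∀ c < κ, (2 : Cardinal.{0}) ^ c < κ :=
    Stmt16Aux.kappa_strong_limit hκ hreg hκ2 UU hcc hfine
  -- the branch embedding
  have hbr : Nonempty ((Order.succ κ).ord.ToType ↪ (κ.ord.ToType → Bool)) := by
    apply (Cardinal.le_def _ _).mp
    rw [Stmt16Aux.mk_toType', Cardinal.mk_arrow]
    simp only [Cardinal.lift_id, Cardinal.mk_bool, Stmt16Aux.mk_toType']
    exact Order.succ_le_of_lt (Cardinal.cantor κ)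
  obtain ⟨br⟩ := hbr
  -- the piece-assignment embedding
  have hYE : Nonempty (Stmt16Aux.Yt κ ↪ ↥(Stmt16Aux.RegT κ)) :=
    (Cardinal.le_def _ _).mp
      (le_trans (Stmt16Aux.mk_Yt_le hκ hsl) (Stmt16Aux.regT_large hκ hreg hsl))
  obtain ⟨E⟩ := hYE
  obtain ⟨ENC, hENCinj, hENCrange⟩ := Stmt16Aux.exists_enc (κ := κ) hκ
  obtain ⟨cd⟩ := Stmt16Aux.exists_code (κ := κ) hκ
  -- data extracted from a point of `P_κ(2^κ)`
  let PT : Type := {s : Set ((2 : Cardinal.{0}) ^ κ).ord.ToType // #s < κ}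
  let pos : PT → Set (Order.succ κ).ord.ToType := fun s =>
    {i | cd (Sum.inl (Sum.inl i)) ∈ s.val}
  let cls : PT → Set (Set κ.ord.ToType) := fun s =>
    {C | IsClubIn C ∧ cd (Sum.inl (Sum.inr C)) ∈ s.val}
  let isc : PT → Set {I : Set (Order.succ κ).ord.ToType // #I = κ} := fun s =>
    {I | cd (Sum.inr (ENC I)) ∈ s.val}
  have hposcard : ∀ s, #(pos s) < κ := fun s =>
    Stmt16Aux.card_code_lt s.2 (fun i => cd (Sum.inl (Sum.inl i)))
      (fun a b h => by simpa using cd.injective h)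
  have hclscard : ∀ s, #(cls s) < κ := by
    intro s
    refine lt_of_le_of_lt (Cardinal.mk_le_mk_of_subset
      (fun C hC => hC.2 : cls s ⊆ {C | cd (Sum.inl (Sum.inr C)) ∈ s.val})) ?_
    exact Stmt16Aux.card_code_lt s.2 (fun C => cd (Sum.inl (Sum.inr C)))
      (fun a b h => by simpa using cd.injective h)
  have hisccard : ∀ s, #(isc s) < κ := fun s =>
    Stmt16Aux.card_code_lt s.2 (fun I => cd (Sum.inr (ENC I)))
      (fun a b h => hENCinj (by simpa using cd.injective h))
  -- choice of a "negative" index for every coded `I`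
  have hneg : ∀ (s : PT) (I : ↥(isc s)), ∃ i ∈ I.val.val, i ∉ pos s := by
    intro s I
    by_contra hcon
    push_neg at hcon
    have hsub : I.val.val ⊆ pos s := fun i hi => hcon i hi
    have := Cardinal.mk_le_mk_of_subset hsub
    rw [I.val.2] at this
    exact absurd (lt_of_le_of_lt this (hposcard s)) (lt_irrefl _)
  let nI : ∀ s : PT, ↥(isc s) → (Order.succ κ).ord.ToType := fun s I => (hneg s I).choose
  have hnI1 : ∀ s I, nI s I ∈ I.val.val := fun s I => (hneg s I).choose_spec.1
  have hnI2 : ∀ s I, nI s I ∉ pos s := fun s I => (hneg s I).choose_spec.2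
  let negs : PT → Set (Order.succ κ).ord.ToType := fun s => Set.range (nI s)
  have hnegscard : ∀ s, #(negs s) < κ := fun s =>
    lt_of_le_of_lt Cardinal.mk_range_le (hisccard s)
  -- the two families of branches
  have hPQdisj : ∀ s, Disjoint (br '' pos s) (br '' negs s) := by
    intro s
    rw [Set.disjoint_left]
    rintro _ ⟨i, hi, rfl⟩ ⟨j, hj, hij⟩
    obtain ⟨I, rfl⟩ := hj
    exact hnI2 s I (br.injective hij ▸ hi)
  -- the choice of the generic point
  have hδex : ∀ s : PT, ∃ z, (∀ f ∈ br '' pos s, z ∈ Stmt16Aux.Sf E f) ∧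
      (∀ g ∈ br '' negs s, z ∉ Stmt16Aux.Sf E g) ∧ z ∈ ⋂₀ cls s := by
    intro s
    refine Stmt16Aux.Sf_combo hκ hreg E.injective _ _
      (lt_of_le_of_lt Cardinal.mk_image_le (hposcard s))
      (lt_of_le_of_lt Cardinal.mk_image_le (hnegscard s))
      (hPQdisj s) (cls s) (hclscard s) (fun C hC => hC.1)
  let δ : PT → κ.ord.ToType := fun s => (hδex s).choose
  have hδ1 : ∀ s, ∀ f ∈ br '' pos s, δ s ∈ Stmt16Aux.Sf E f := fun s => (hδex s).choose_spec.1
  have hδ2 : ∀ s, ∀ g ∈ br '' negs s, δ s ∉ Stmt16Aux.Sf E g := fun s => (hδex s).choose_spec.2.1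
  have hδ3 : ∀ s, δ s ∈ ⋂₀ cls s := fun s => (hδex s).choose_spec.2.2
  refine ⟨Ultrafilter.map δ UU, ?_, ?_, ?_⟩
  · -- κ-completeness
    intro ι f hι hf
    have h1 : ∀ i, δ ⁻¹' (f i) ∈ UU := fun i => Ultrafilter.mem_map.mp (hf i)
    have h2 := hcc ι _ hι h1
    refine Ultrafilter.mem_map.mpr ?_
    rw [Set.preimage_iInter]
    exact h2
  · -- contains all clubs
    intro C hC
    refine Ultrafilter.mem_map.mpr ?_
    refine Filter.mem_of_superset (hfine (cd (Sum.inl (Sum.inr C)))) ?_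
    intro s hs
    have hCin : C ∈ cls s := ⟨hC, hs⟩
    exact Set.mem_sInter.mp (hδ3 s) C hCin
  · -- failure of the Galvin property
    intro hGal
    have hmemW : ∀ i, Stmt16Aux.Sf E (br i) ∈ Ultrafilter.map δ UU := by
      intro i
      refine Ultrafilter.mem_map.mpr ?_
      refine Filter.mem_of_superset (hfine (cd (Sum.inl (Sum.inl i)))) ?_
      intro s hs
      exact hδ1 s (br i) ⟨i, hs, rfl⟩
    obtain ⟨I, hIcard, hIW⟩ := hGal (fun i => Stmt16Aux.Sf E (br i)) hmemW
    · have hG : {s : PT | cd (Sum.inr (ENC ⟨I, hIcard⟩)) ∈ s.val} ∈ UU := hfine _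
      have hpre : δ ⁻¹' (⋂ i ∈ I, Stmt16Aux.Sf E (br i)) ∈ UU := Ultrafilter.mem_map.mp hIW
      obtain ⟨s, hs1, hs2⟩ := Ultrafilter.nonempty_of_mem (Filter.inter_mem hpre hG)
      have hI' : (⟨I, hIcard⟩ : {I : Set (Order.succ κ).ord.ToType // #I = κ}) ∈ isc s := hs2
      have h6 : δ s ∉ Stmt16Aux.Sf E (br (nI s ⟨⟨I, hIcard⟩, hI'⟩)) :=
        hδ2 s _ ⟨nI s ⟨⟨I, hIcard⟩, hI'⟩, ⟨⟨⟨I, hIcard⟩, hI'⟩, rfl⟩, rfl⟩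
      have h7 : δ s ∈ Stmt16Aux.Sf E (br (nI s ⟨⟨I, hIcard⟩, hI'⟩)) :=
        Set.mem_iInter₂.mp hs1 _ (hnI1 s ⟨⟨I, hIcard⟩, hI'⟩)
      exact h6 h7
end
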